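/- arXiv:math/9911137 — 7 statements merged into one kernel-verified Lean document; each statement's English description precedes it below -/
import Mathlib

section
/- For a ring R the following are equivalent: (1) R is left coherent (every finitely generated left ideal of R is finitely presented); (2) for every finitely presented right R-module M the left R-module M* = Hom_R(M, R) is finitely presented; (3) for every finitely presented right R-module M the left R-module M* = Hom_R(M, R) is finitely generated. -/
/-!
Common definitions: rings are associative with identity, not necessarily commutative.
Left `R`-modules are `Module R M`; right `R`-modules are `Module Rᵐᵒᵖ M`.
-/

universe u

open MulOpposite Function Pointwise

section Defs

variable (R : Type u) [Ring R]

/-- Defining relations of the tensor product `K ⊗_R M` of a right `R`-module `K`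
and a left `R`-module `M`, inside the free abelian group on `K × M`. -/
def TensorRels (K M : Type u) [AddCommGroup K] [Module Rᵐᵒᵖ K]
    [AddCommGroup M] [Module R M] : AddSubgroup (FreeAbelianGroup (K × M)) :=
  AddSubgroup.closure
    ({x | ∃ k₁ k₂ m, x = FreeAbelianGroup.of (k₁ + k₂, m) - FreeAbelianGroup.of (k₁, m) -
        FreeAbelianGroup.of (k₂, m)} ∪
     {x | ∃ k m₁ m₂, x = FreeAbelianGroup.of (k, m₁ + m₂) - FreeAbelianGroup.of (k, m₁) -
        FreeAbelianGroup.of (k, m₂)} ∪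
     {x | ∃ (r : R) (k : K) (m : M),
        x = FreeAbelianGroup.of (op r • k, m) - FreeAbelianGroup.of (k, r • m)})

/-- The tensor product `K ⊗_R M` of a right `R`-module `K` and a left `R`-module `M`
over the (not necessarily commutative) ring `R`, as an abelian group. -/
def NCTensor (K M : Type u) [AddCommGroup K] [Module Rᵐᵒᵖ K]
    [AddCommGroup M] [Module R M] : Type u :=
  FreeAbelianGroup (K × M) ⧸ TensorRels R K M

instance (K M : Type u) [AddCommGroup K] [Module Rᵐᵒᵖ K] [AddCommGroup M] [Module R M] :
    AddCommGroup (NCTensor R K M) :=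
  QuotientAddGroup.Quotient.addCommGroup _

/-- The map `μ ⊗ ν : K ⊗_R M → K' ⊗_R M'` induced by a map `μ` of right `R`-modules
and a map `ν` of left `R`-modules. -/
def tensorCongr {K K' M M' : Type u} [AddCommGroup K] [Module Rᵐᵒᵖ K]
    [AddCommGroup K'] [Module Rᵐᵒᵖ K'] [AddCommGroup M] [Module R M]
    [AddCommGroup M'] [Module R M'] (μ : K →ₗ[Rᵐᵒᵖ] K') (ν : M →ₗ[R] M') :
    NCTensor R K M →+ NCTensor R K' M' :=
  QuotientAddGroup.map (TensorRels R K M) (TensorRels R K' M')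
    (FreeAbelianGroup.lift fun p : K × M => FreeAbelianGroup.of (μ p.1, ν p.2))
    (by
      refine (AddSubgroup.closure_le _).2 ?_
      rintro x ((⟨k₁, k₂, m, rfl⟩ | ⟨k, m₁, m₂, rfl⟩) | ⟨r, k, m, rfl⟩) <;>
        refine AddSubgroup.mem_comap.2 (AddSubgroup.subset_closure ?_)
      · exact Or.inl <| Or.inl ⟨μ k₁, μ k₂, ν m, by simp [map_add]⟩
      · exact Or.inl <| Or.inr ⟨μ k, ν m₁, ν m₂, by simp [map_add]⟩
      · exact Or.inr ⟨r, μ k, ν m, by simp [map_smul]⟩)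

/-- A left `R`-module `M` is flat if `μ ⊗ M` is injective for every injective
homomorphism `μ` of right `R`-modules. -/
def ModFlat (M : Type u) [AddCommGroup M] [Module R M] : Prop :=
  ∀ (K L : Type u) [AddCommGroup K] [Module Rᵐᵒᵖ K] [AddCommGroup L] [Module Rᵐᵒᵖ L]
    (μ : K →ₗ[Rᵐᵒᵖ] L), Injective μ →
      Injective (tensorCongr R μ (LinearMap.id : M →ₗ[R] M))

/-- A right `R`-module `M` is flat if `M ⊗ μ` is injective for every injective
homomorphism `μ` of left `R`-modules. -/
def ModFlatRight (M : Type u) [AddCommGroup M] [Module Rᵐᵒᵖ M] : Prop :=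
  ∀ (K L : Type u) [AddCommGroup K] [Module R K] [AddCommGroup L] [Module R L]
    (μ : K →ₗ[R] L), Injective μ →
      Injective (tensorCongr R (LinearMap.id : M →ₗ[Rᵐᵒᵖ] M) μ)

/-- A left `R`-module `M` is fp-flat if `μ ⊗ M` is injective for every injective
homomorphism `μ` of finitely presented right `R`-modules. -/
def FpFlat (M : Type u) [AddCommGroup M] [Module R M] : Prop :=
  ∀ (K L : Type u) [AddCommGroup K] [Module Rᵐᵒᵖ K] [AddCommGroup L] [Module Rᵐᵒᵖ L],
    Module.FinitePresentation Rᵐᵒᵖ K → Module.FinitePresentation Rᵐᵒᵖ L →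
    ∀ (μ : K →ₗ[Rᵐᵒᵖ] L), Injective μ →
      Injective (tensorCongr R μ (LinearMap.id : M →ₗ[R] M))

/-- A right `R`-module `M` is fp-flat if `M ⊗ μ` is injective for every injective
homomorphism `μ` of finitely presented left `R`-modules. -/
def FpFlatRight (M : Type u) [AddCommGroup M] [Module Rᵐᵒᵖ M] : Prop :=
  ∀ (K L : Type u) [AddCommGroup K] [Module R K] [AddCommGroup L] [Module R L],
    Module.FinitePresentation R K → Module.FinitePresentation R L →
    ∀ (μ : K →ₗ[R] L), Injective μ →
      Injective (tensorCongr R (LinearMap.id : M →ₗ[Rᵐᵒᵖ] M) μ)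

/-- `Ext¹_R(F, M) = 0`. -/
def ExtVanish (F M : Type u) [AddCommGroup F] [Module R F] [AddCommGroup M] [Module R M] :
    Prop :=
  Subsingleton
    (((Ext ℤ (ModuleCat.{u} R) 1).obj (Opposite.op (ModuleCat.of R F))).obj (ModuleCat.of R M))

/-- A left `R`-module `M` is FP-injective (absolutely pure) if `Ext¹_R(F, M) = 0` for
every finitely presented left `R`-module `F`. -/
def FPInjective (M : Type u) [AddCommGroup M] [Module R M] : Prop :=
  ∀ (F : Type u) [AddCommGroup F] [Module R F], Module.FinitePresentation R F → ExtVanish R F M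

/-- A left `R`-module `M` is fp-injective if for every injective homomorphism `μ : K → L`
of finitely presented left `R`-modules, the induced map `Hom(L, M) → Hom(K, M)` is
surjective. -/
def FpInjective (M : Type u) [AddCommGroup M] [Module R M] : Prop :=
  ∀ (K L : Type u) [AddCommGroup K] [Module R K] [AddCommGroup L] [Module R L],
    Module.FinitePresentation R K → Module.FinitePresentation R L →
    ∀ (μ : K →ₗ[R] L), Injective μ → ∀ f : K →ₗ[R] M, ∃ g : L →ₗ[R] M, g ∘ₗ μ = f

/-- A left `R`-module `K` is an FP-cogenerator if for every nonzero homomorphism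
`f : M → N` from a finitely generated module `M` to a finitely presented module `N`
there is `g : N → K` with `g ∘ f ≠ 0`. -/
def IsFPCogenerator (K : Type u) [AddCommGroup K] [Module R K] : Prop :=
  ∀ (M N : Type u) [AddCommGroup M] [Module R M] [AddCommGroup N] [Module R N],
    Module.Finite R M → Module.FinitePresentation R N →
    ∀ f : M →ₗ[R] N, f ≠ 0 → ∃ g : N →ₗ[R] K, g ∘ₗ f ≠ 0

/-- A left `R`-module `K` is a cogenerator if for every nonzero homomorphism `f : M → N`
of left `R`-modules there is `g : N → K` with `g ∘ f ≠ 0`. -/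
def IsCogenerator (K : Type u) [AddCommGroup K] [Module R K] : Prop :=
  ∀ (M N : Type u) [AddCommGroup M] [Module R M] [AddCommGroup N] [Module R N],
    ∀ f : M →ₗ[R] N, f ≠ 0 → ∃ g : N →ₗ[R] K, g ∘ₗ f ≠ 0

/-- The canonical evaluation map `M → M** = Hom(Hom(M, R), R)` for a left `R`-module `M`;
here `M* = Hom_R(M, R)` is a right `R`-module. -/
def dualEval (M : Type u) [AddCommGroup M] [Module R M] :
    M →ₗ[R] ((M →ₗ[R] R) →ₗ[Rᵐᵒᵖ] R) where
  toFun m :=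
    { toFun := fun f => f m
      map_add' := fun f g => rfl
      map_smul' := fun r f => rfl }
  map_add' m m' := LinearMap.ext fun f => f.map_add m m'
  map_smul' r m := LinearMap.ext fun f => by simp [f.map_smul]

/-- The canonical evaluation map `M → M** = Hom(Hom(M, R), R)` for a right `R`-module `M`;
here `M* = Hom_R(M, R)` is a left `R`-module. -/
def dualEvalRight (M : Type u) [AddCommGroup M] [Module Rᵐᵒᵖ M] :
    M →ₗ[Rᵐᵒᵖ] ((M →ₗ[Rᵐᵒᵖ] R) →ₗ[R] R) where
  toFun m :=
    { toFun := fun f => f m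
      map_add' := fun f g => rfl
      map_smul' := fun r f => rfl }
  map_add' m m' := LinearMap.ext fun f => f.map_add m m'
  map_smul' r m := LinearMap.ext fun f => by simp [f.map_smul]

/-- The left annihilator of a subset `X ⊆ R`. -/
def lAnn (X : Set R) : Set R := {a | ∀ x ∈ X, a * x = 0}

/-- The right annihilator of a subset `X ⊆ R`. -/
def rAnn (X : Set R) : Set R := {a | ∀ x ∈ X, x * a = 0}

/-- `R` is left coherent: every finitely generated left ideal is finitely presented. -/
def LeftCoherent : Prop :=
  ∀ I : Submodule R R, I.FG → Module.FinitePresentation R I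

/-- `R` is right coherent: every finitely generated right ideal is finitely presented. -/
def RightCoherent : Prop :=
  ∀ I : Submodule Rᵐᵒᵖ R, I.FG → Module.FinitePresentation Rᵐᵒᵖ I

/-- A left `R`-module `M` embeds in a free left `R`-module. -/
def EmbedsInFree (M : Type u) [AddCommGroup M] [Module R M] : Prop :=
  ∃ (ι : Type u) (f : M →ₗ[R] (ι →₀ R)), Injective f

/-- A right `R`-module `M` embeds in a free right `R`-module. -/
def EmbedsInFreeRight (M : Type u) [AddCommGroup M] [Module Rᵐᵒᵖ M] : Prop :=
  ∃ (ι : Type u) (f : M →ₗ[Rᵐᵒᵖ] (ι →₀ R)), Injective f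

/-- `R` is a left IF-ring: every finitely presented left `R`-module embeds in a free module. -/
def LeftIF : Prop :=
  ∀ (M : Type u) [AddCommGroup M] [Module R M],
    Module.FinitePresentation R M → EmbedsInFree R M

/-- `R` is a right IF-ring: every finitely presented right `R`-module embeds in a free module. -/
def RightIF : Prop :=
  ∀ (M : Type u) [AddCommGroup M] [Module Rᵐᵒᵖ M],
    Module.FinitePresentation Rᵐᵒᵖ M → EmbedsInFreeRight R M

/-- A module is cyclic if it is generated by one element. -/
def CyclicModule (M : Type u) [AddCommGroup M] [Module R M] : Prop :=
  ∃ m : M, Submodule.span R {m} = ⊤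

/-- `R` is a left CF-ring: every cyclic left `R`-module embeds in a free module. -/
def LeftCF : Prop :=
  ∀ (M : Type u) [AddCommGroup M] [Module R M], CyclicModule R M → EmbedsInFree R M

/-- `R` is a left FGF-ring: every finitely generated left `R`-module embeds in a free module. -/
def LeftFGF : Prop :=
  ∀ (M : Type u) [AddCommGroup M] [Module R M], Module.Finite R M → EmbedsInFree R M

/-- `R` is a left Kasch ring: `Hom_R(M, R) ≠ 0` for every nonzero cyclic left `R`-module. -/
def LeftKasch : Prop :=
  ∀ (M : Type u) [AddCommGroup M] [Module R M],
    CyclicModule R M → Nontrivial M → ∃ f : M →ₗ[R] R, f ≠ 0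

/-- `R` is a right Kasch ring: `Hom_R(M, R) ≠ 0` for every nonzero cyclic right `R`-module. -/
def RightKasch : Prop :=
  ∀ (M : Type u) [AddCommGroup M] [Module Rᵐᵒᵖ M],
    CyclicModule Rᵐᵒᵖ M → Nontrivial M → ∃ f : M →ₗ[Rᵐᵒᵖ] R, f ≠ 0

/-- The socle of a module: the sum of all its simple submodules. -/
def socle (M : Type u) [AddCommGroup M] [Module R M] : Submodule R M :=
  sSup {N : Submodule R M | IsSimpleModule R N}

/-- `R` is left semiartinian: every nonzero cyclic left `R`-module has a nonzero socle. -/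
def LeftSemiartinian : Prop :=
  ∀ (M : Type u) [AddCommGroup M] [Module R M],
    CyclicModule R M → Nontrivial M → socle R M ≠ ⊥

/-- A submodule `N ⊆ M` is essential if it meets every nonzero submodule nontrivially. -/
def EssentialSub {M : Type u} [AddCommGroup M] [Module R M] (N : Submodule R M) : Prop :=
  ∀ P : Submodule R M, P ≠ ⊥ → N ⊓ P ≠ ⊥

/-- `R` is semiregular: `R/rad R` is von Neumann regular,
where `rad R` is the Jacobson radical. -/
def Semiregular : Prop :=
  ∀ a : R, ∃ x : R, a - a * x * a ∈ Ideal.jacobson (⊥ : Ideal R)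

/-- `R` is semiperfect: `R/rad R` is semisimple and idempotents lift modulo `rad R`. -/
def Semiperfect : Prop :=
  IsSemisimpleModule R (R ⧸ Ideal.jacobson (⊥ : Ideal R)) ∧
    ∀ a : R, a * a - a ∈ Ideal.jacobson (⊥ : Ideal R) →
      ∃ e : R, e * e = e ∧ e - a ∈ Ideal.jacobson (⊥ : Ideal R)

/-- A module is indecomposable if it is nonzero and is not the direct sum of two
nonzero submodules. -/
def IndecModule (M : Type u) [AddCommGroup M] [Module R M] : Prop :=
  Nontrivial M ∧ ∀ A B : Submodule R M, IsCompl A B → A = ⊥ ∨ B = ⊥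

/-- `R` is weakly quasi-Frobenius: left and right coherent and left and right FP-injective. -/
def WQF : Prop :=
  LeftCoherent R ∧ RightCoherent R ∧ FPInjective R R ∧ FPInjective Rᵐᵒᵖ R

/-- `R` is quasi-Frobenius: left and right noetherian and left and right self-injective. -/
def QF : Prop :=
  IsNoetherianRing R ∧ IsNoetherian Rᵐᵒᵖ R ∧ Module.Injective R R ∧ Module.Injective Rᵐᵒᵖ R

end Defs

/-- A group is locally finite if every finitely generated subgroup is finite. -/
def LocallyFiniteGroup (G : Type*) [Group G] : Prop :=
  ∀ H : Subgroup G, H.FG → Finite H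


set_option synthInstance.maxHeartbeats 1000000
set_option maxHeartbeats 1000000

section Coherence
variable {R : Type u} [Ring R]


lemma fp_congr {M N : Type u} [AddCommGroup M] [Module R M] [AddCommGroup N] [Module R N]
    (e : M ≃ₗ[R] N) (h : Module.FinitePresentation R M) : Module.FinitePresentation R N := by
  haveI := h
  exact Module.finitePresentation_of_surjective e.toLinearMap e.surjective
    (by rw [LinearEquiv.ker]; exact Submodule.fg_bot)

lemma fp_subsingleton {M : Type u} [AddCommGroup M] [Module R M] [Subsingleton M] :
    Module.FinitePresentation R M := by
  refine Module.finitePresentation_of_surjective (0 : R →ₗ[R] M)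
    (fun m => ⟨0, Subsingleton.elim _ _⟩) ?_
  rw [LinearMap.ker_zero]
  exact Module.Finite.fg_top

lemma range_ftlc {S M : Type u} [Semiring S] [AddCommMonoid M] [Module S M]
    {k : ℕ} (v : Fin k → M) :
    LinearMap.range (Fintype.linearCombination S v) = Submodule.span S (Set.range v) := by
  rw [← Finsupp.linearCombination_eq_fintype_linearCombination S v, LinearMap.range_comp,
    LinearEquiv.range, Submodule.map_top, Finsupp.range_linearCombination]

lemma coherent_sub_fp (h : LeftCoherent R) :
    ∀ (n : ℕ) (N : Submodule R (Fin n → R)), N.FG → Module.FinitePresentation R N := by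
  intro n
  induction n with
  | zero => intro N _; exact fp_subsingleton
  | succ n IH =>
    intro N hN
    haveI hfin : Module.Finite R N := Module.Finite.iff_fg.mpr hN
    set π : (Fin (n+1) → R) →ₗ[R] R := LinearMap.proj (Fin.last n) with hπdef
    haveI hIfp : Module.FinitePresentation R (N.map π) := h _ (hN.map π)
    set p : N →ₗ[R] (N.map π) :=
      (π.domRestrict N).codRestrict (N.map π) (fun x => ⟨x.1, x.2, rfl⟩) with hpdef
    have hp : Surjective p := by
      rintro ⟨y, x, hx, rfl⟩
      exact ⟨⟨x, hx⟩, rfl⟩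
    have hker : (LinearMap.ker p).FG := Module.FinitePresentation.fg_ker p hp
    let j : LinearMap.ker p →ₗ[R] (Fin n → R) :=
      { toFun := fun x => fun i => (x.1.1 : Fin (n+1) → R) i.castSucc
        map_add' := fun x y => rfl
        map_smul' := fun r x => rfl }
    have hj : Injective j := by
      rintro x y hxy
      have h1 : ∀ i : Fin n, (x.1.1 : Fin (n+1) → R) i.castSucc = y.1.1 i.castSucc :=
        fun i => congrFun hxy i
      have hx2 : (x.1.1 : Fin (n+1) → R) (Fin.last n) = 0 :=
        congrArg Subtype.val x.2
      have hy2 : (y.1.1 : Fin (n+1) → R) (Fin.last n) = 0 :=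
        congrArg Subtype.val y.2
      refine Subtype.ext (Subtype.ext (funext fun i => ?_))
      refine Fin.lastCases ?_ ?_ i
      · rw [hx2, hy2]
      · exact h1
    haveI : Module.Finite R (LinearMap.ker p) := Module.Finite.iff_fg.mpr hker
    have hrfg : (LinearMap.range j).FG := by
      rw [LinearMap.range_eq_map]
      exact Module.Finite.fg_top.map j
    haveI : Module.FinitePresentation R (LinearMap.ker p) := by
      haveI := IH _ hrfg
      exact fp_congr (N := LinearMap.ker p) (by exact (LinearEquiv.ofInjective j hj).symm) this
    exact Module.finitePresentation_of_ker p hp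

lemma coherent_ker_fp (h : LeftCoherent R) {n m : ℕ} (δ : (Fin n → R) →ₗ[R] (Fin m → R)) :
    Module.FinitePresentation R (LinearMap.ker δ) := by
  have h1 : (LinearMap.range δ).FG := by
    rw [LinearMap.range_eq_map]; exact Module.Finite.fg_top.map δ
  haveI h2 : Module.FinitePresentation R (LinearMap.range δ) := coherent_sub_fp h m _ h1
  have h3 : (LinearMap.ker δ.rangeRestrict).FG :=
    Module.FinitePresentation.fg_ker _ δ.surjective_rangeRestrict
  rw [LinearMap.ker_rangeRestrict] at h3
  exact coherent_sub_fp h n _ h3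



/-- The dual of a map between finite free right modules, as a map of left modules. -/
def deltaMap {n m : ℕ} (q : (Fin m → Rᵐᵒᵖ) →ₗ[Rᵐᵒᵖ] (Fin n → Rᵐᵒᵖ)) :
    (Fin n → R) →ₗ[R] (Fin m → R) where
  toFun x := fun j => ∑ i, x i * (q (Pi.single j 1) i).unop
  map_add' x y := by
    funext j
    simp [add_mul, Finset.sum_add_distrib]
  map_smul' r x := by
    funext j
    simp [Finset.mul_sum, mul_assoc]

lemma single_eq_smul {n : ℕ} (y : Fin n → Rᵐᵒᵖ) (i : Fin n) :
    (Pi.single i (y i) : Fin n → Rᵐᵒᵖ) = y i • Pi.single i 1 := by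
  rw [← Pi.single_smul, smul_eq_mul, mul_one]

lemma dual_apply_eq {n : ℕ} {M : Type u} [AddCommGroup M] [Module Rᵐᵒᵖ M]
    (π : (Fin n → Rᵐᵒᵖ) →ₗ[Rᵐᵒᵖ] M) (f : M →ₗ[Rᵐᵒᵖ] R) (y : Fin n → Rᵐᵒᵖ) :
    f (π y) = ∑ i, f (π (Pi.single i 1)) * (y i).unop := by
  conv_lhs => rw [← Finset.univ_sum_single y, map_sum, map_sum]
  refine Finset.sum_congr rfl fun i _ => ?_
  rw [single_eq_smul y i, map_smul, map_smul]
  rfl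

lemma dual_equiv {n m : ℕ} {M : Type u} [AddCommGroup M] [Module Rᵐᵒᵖ M]
    (π : (Fin n → Rᵐᵒᵖ) →ₗ[Rᵐᵒᵖ] M) (hπ : Surjective π)
    (q : (Fin m → Rᵐᵒᵖ) →ₗ[Rᵐᵒᵖ] (Fin n → Rᵐᵒᵖ)) (hq : LinearMap.range q = LinearMap.ker π) :
    Nonempty ((M →ₗ[Rᵐᵒᵖ] R) ≃ₗ[R] LinearMap.ker (deltaMap q)) := by
  have hπq : ∀ z, π (q z) = 0 := by
    intro z
    have : q z ∈ LinearMap.ker π := hq ▸ LinearMap.mem_range_self q z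
    exact this
  let F₀ : (M →ₗ[Rᵐᵒᵖ] R) →ₗ[R] (Fin n → R) :=
    { toFun := fun f => fun i => f (π (Pi.single i 1))
      map_add' := fun f g => rfl
      map_smul' := fun r f => rfl }
  have hmem : ∀ f, F₀ f ∈ LinearMap.ker (deltaMap q) := by
    intro f
    rw [LinearMap.mem_ker]
    funext j
    show ∑ i, f (π (Pi.single i 1)) * ((q (Pi.single j 1)) i).unop = (0 : Fin m → R) j
    rw [← dual_apply_eq π f (q (Pi.single j 1)), hπq, map_zero]
    simp
  let F : (M →ₗ[Rᵐᵒᵖ] R) →ₗ[R] LinearMap.ker (deltaMap q) := F₀.codRestrict _ hmem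
  have hinj : Injective F := by
    intro f g hfg
    ext x
    obtain ⟨y, rfl⟩ := hπ x
    rw [dual_apply_eq π f y, dual_apply_eq π g y]
    refine Finset.sum_congr rfl fun i _ => ?_
    have : F₀ f i = F₀ g i := congrFun (congrArg Subtype.val hfg) i
    rw [show f (π (Pi.single i 1)) = g (π (Pi.single i 1)) from this]
  have hsurj : Surjective F := by
    rintro ⟨x, hx⟩
    rw [LinearMap.mem_ker] at hx
    -- build g on the free module
    let g : (Fin n → Rᵐᵒᵖ) →ₗ[Rᵐᵒᵖ] R :=
      { toFun := fun y => ∑ i, x i * (y i).unop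
        map_add' := fun y z => by simp [mul_add, Finset.sum_add_distrib]
        map_smul' := fun c y => by
          simp only [Pi.smul_apply, smul_eq_mul, unop_mul, RingHom.id_apply]
          rw [show (c • ∑ i, x i * (y i).unop) = (∑ i, x i * (y i).unop) * c.unop from rfl,
            Finset.sum_mul]
          exact Finset.sum_congr rfl fun i _ => (mul_assoc _ _ _).symm }
    have hgq : ∀ j, g (q (Pi.single j 1)) = 0 := by
      intro j
      have : deltaMap q x j = 0 := by rw [hx]; rfl
      exact this
    have hgker : LinearMap.ker π ≤ LinearMap.ker g := by
      rw [← hq]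
      rintro _ ⟨z, rfl⟩
      rw [LinearMap.mem_ker]
      conv_lhs => rw [← Finset.univ_sum_single z, map_sum, map_sum]
      refine Finset.sum_eq_zero fun j _ => ?_
      rw [single_eq_smul z j, map_smul, map_smul, hgq j, smul_zero]
    let e := π.quotKerEquivOfSurjective hπ
    let f : M →ₗ[Rᵐᵒᵖ] R := (Submodule.liftQ (LinearMap.ker π) g hgker).comp e.symm.toLinearMap
    have he : ∀ y, e (Submodule.Quotient.mk y) = π y := by
      intro y
      rfl
    have hfπ : ∀ y, f (π y) = g y := by
      intro y
      show Submodule.liftQ (LinearMap.ker π) g hgker (e.symm (π y)) = g y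
      rw [← he y, LinearEquiv.symm_apply_apply, Submodule.liftQ_apply]
    refine ⟨f, Subtype.ext (funext fun i => ?_)⟩
    show f (π (Pi.single i 1)) = x i
    rw [hfπ]
    show ∑ j, x j * ((Pi.single i (1:Rᵐᵒᵖ) : Fin n → Rᵐᵒᵖ) j).unop = x i
    simp [Pi.single_apply, apply_ite unop]
  exact ⟨LinearEquiv.ofBijective F ⟨hinj, hsurj⟩⟩


lemma one_two (h : LeftCoherent R) (M : Type u) [AddCommGroup M] [Module Rᵐᵒᵖ M]
    (hM : Module.FinitePresentation Rᵐᵒᵖ M) : Module.FinitePresentation R (M →ₗ[Rᵐᵒᵖ] R) := by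
  haveI := hM
  obtain ⟨n, v, hv⟩ := Module.Finite.exists_fin (R := Rᵐᵒᵖ) (M := M)
  set π : (Fin n → Rᵐᵒᵖ) →ₗ[Rᵐᵒᵖ] M := Fintype.linearCombination Rᵐᵒᵖ v with hπdef
  have hπ : Surjective π := by
    rw [← LinearMap.range_eq_top, hπdef, range_ftlc, hv]
  have hker : (LinearMap.ker π).FG := Module.FinitePresentation.fg_ker π hπ
  obtain ⟨m, s, hs⟩ := Submodule.fg_iff_exists_fin_generating_family.mp hker
  set q : (Fin m → Rᵐᵒᵖ) →ₗ[Rᵐᵒᵖ] (Fin n → Rᵐᵒᵖ) := Fintype.linearCombination Rᵐᵒᵖ s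
    with hqdef
  have hq : LinearMap.range q = LinearMap.ker π := by rw [hqdef, range_ftlc, hs]
  obtain ⟨e⟩ := dual_equiv π hπ q hq
  exact fp_congr e.symm (coherent_ker_fp h (deltaMap q))

lemma three_one
    (h : ∀ (M : Type u) [AddCommGroup M] [Module Rᵐᵒᵖ M],
      Module.FinitePresentation Rᵐᵒᵖ M → Module.Finite R (M →ₗ[Rᵐᵒᵖ] R)) :
    LeftCoherent R := by
  intro I hI
  obtain ⟨k, a, ha⟩ := Submodule.fg_iff_exists_fin_generating_family.mp hI
  set v : Fin 1 → (Fin k → Rᵐᵒᵖ) := fun _ => fun i => op (a i) with hvdef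
  set q : (Fin 1 → Rᵐᵒᵖ) →ₗ[Rᵐᵒᵖ] (Fin k → Rᵐᵒᵖ) := Fintype.linearCombination Rᵐᵒᵖ v
    with hqdef
  set K := LinearMap.range q with hKdef
  have hKfg : K.FG := by
    rw [hKdef, LinearMap.range_eq_map]
    exact Module.Finite.fg_top.map q
  have hMfp : Module.FinitePresentation Rᵐᵒᵖ ((Fin k → Rᵐᵒᵖ) ⧸ K) :=
    Module.finitePresentation_of_surjective K.mkQ K.mkQ_surjective
      (by rw [Submodule.ker_mkQ]; exact hKfg)
  have hq : LinearMap.range q = LinearMap.ker K.mkQ := by rw [Submodule.ker_mkQ]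
  obtain ⟨e⟩ := dual_equiv K.mkQ K.mkQ_surjective q hq
  haveI : Module.Finite R (((Fin k → Rᵐᵒᵖ) ⧸ K) →ₗ[Rᵐᵒᵖ] R) := h _ hMfp
  haveI : Module.Finite R (LinearMap.ker (deltaMap q)) := Module.Finite.equiv e
  have hkfg : (LinearMap.ker (deltaMap q)).FG := Module.Finite.iff_fg.mp this
  -- the left-module side
  set φ : (Fin k → R) →ₗ[R] R := Fintype.linearCombination R a with hφdef
  have hrange : LinearMap.range φ = I := by rw [hφdef, range_ftlc, ha]
  have hq0 : q (Pi.single (0 : Fin 1) (1 : Rᵐᵒᵖ)) = v 0 := by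
    rw [hqdef, Fintype.linearCombination_apply_single, one_smul]
  have hdelta : ∀ x : Fin k → R, deltaMap q x 0 = φ x := by
    intro x
    show ∑ i, x i * (q (Pi.single 0 1) i).unop = φ x
    rw [hq0, hφdef, Fintype.linearCombination_apply]
    exact Finset.sum_congr rfl fun i _ => rfl
  have hkerφ : LinearMap.ker (deltaMap q) = LinearMap.ker φ := by
    ext x
    simp only [LinearMap.mem_ker]
    constructor
    · intro hx
      rw [← hdelta x, hx]
      rfl
    · intro hx
      funext j
      rw [Subsingleton.elim j (0 : Fin 1)]
      rw [hdelta x, hx]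
      rfl
  set ψ : (Fin k → R) →ₗ[R] I :=
    φ.codRestrict I (fun x => hrange ▸ LinearMap.mem_range_self φ x) with hψdef
  have hψ : Surjective ψ := by
    rintro ⟨y, hy⟩
    rw [← hrange] at hy
    obtain ⟨x, rfl⟩ := hy
    exact ⟨x, rfl⟩
  refine Module.finitePresentation_of_free_of_surjective ψ hψ ?_
  rw [hψdef, LinearMap.ker_codRestrict, ← hkerφ]
  exact hkfg

end Coherence

/-- Proposition 1.1: `R` is left coherent iff the dual `M* = Hom_R(M, R)` of every finitely
presented right `R`-module `M` is finitely presented as a left `R`-module, iff it is always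
finitely generated. -/
theorem stmt_0 (R : Type u) [Ring R] :
    List.TFAE
      [LeftCoherent R,
       ∀ (M : Type u) [AddCommGroup M] [Module Rᵐᵒᵖ M],
         Module.FinitePresentation Rᵐᵒᵖ M → Module.FinitePresentation R (M →ₗ[Rᵐᵒᵖ] R),
       ∀ (M : Type u) [AddCommGroup M] [Module Rᵐᵒᵖ M],
         Module.FinitePresentation Rᵐᵒᵖ M → Module.Finite R (M →ₗ[Rᵐᵒᵖ] R)] := by
  tfae_have 1 → 2 := fun h M _ _ hM => one_two h M hM
  tfae_have 2 → 3 := by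
    intro h M _ _ hM
    haveI := h M hM
    infer_instance
  tfae_have 3 → 1 := fun h => three_one h
  tfae_finish
end

section
/- If the right R-module R_R is FP-injective, then: (a) for arbitrary finitely generated right ideals I, J of R one has l(I ∩ J) = l(I) + l(J); and (b) for an arbitrary finitely generated left ideal I of R one has I = l(r(I)). -/
/-!
Common definitions: rings are associative with identity, not necessarily commutative.
Left `R`-modules are `Module R M`; right `R`-modules are `Module Rᵐᵒᵖ M`.
-/

universe u

open MulOpposite Function Pointwise

section NCauxSec
open CategoryTheory
def NCaux.unopLE (R : Type u) [Ring R] : Rᵐᵒᵖ ≃ₗ[Rᵐᵒᵖ] R where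
  toFun := unop
  invFun := op
  left_inv _ := rfl
  right_inv _ := rfl
  map_add' _ _ := rfl
  map_smul' r x := by simp [MulOpposite.smul_eq_mul_unop]

instance (R : Type u) [Ring R] : Module.Free Rᵐᵒᵖ R := Module.Free.of_equiv (NCaux.unopLE R)
instance (R : Type u) [Ring R] : Module.Finite Rᵐᵒᵖ R := Module.Finite.equiv (NCaux.unopLE R)
instance (R : Type u) [Ring R] : Module.FinitePresentation Rᵐᵒᵖ R :=
  Module.finitePresentation_of_projective _ _

/-- Left multiplication as a right-module map. -/
def NCaux.lmul {R : Type u} [Ring R] (a : R) : R →ₗ[Rᵐᵒᵖ] R where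
  toFun x := a * x
  map_add' := mul_add a
  map_smul' r x := by simp [MulOpposite.smul_eq_mul_unop, mul_assoc]

@[simp] lemma NCaux.lmul_apply {R : Type u} [Ring R] (a x : R) : NCaux.lmul a x = a * x := rfl

theorem NCaux.ext_lift (S : Type u) [Ring S] (M F : Type u) [AddCommGroup M] [Module S M]
    [AddCommGroup F] [Module S F] [Module.Projective S F] (K : Submodule S F)
    (hv : ExtVanish S (F ⧸ K) M) (f : K →ₗ[S] M) :
    ∃ g : F →ₗ[S] M, ∀ x : K, g x = f x := by
  classical
  let Q : ModuleCat.{u} S := ModuleCat.of S (F ⧸ K)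
  let M' : ModuleCat.{u} S := ModuleCat.of S M
  let F' : ModuleCat.{u} S := ModuleCat.of S F
  obtain ⟨P⟩ : Nonempty (ProjectiveResolution Q) := HasProjectiveResolution.out
  have hz : Limits.IsZero ((P.complex.linearYonedaObj ℤ M').homology 1) := by
    refine Limits.IsZero.of_iso ?_ (P.isoExt (R := ℤ) 1 M').symm
    rw [Limits.IsZero.iff_id_eq_zero]
    have : Subsingleton (((Ext ℤ (ModuleCat.{u} S) 1).obj (Opposite.op Q)).obj M') := hv
    ext x
    exact Subsingleton.elim _ _
  have hex : ((P.complex.linearYonedaObj ℤ M').sc' 0 1 2).Exact := by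
    rw [← HomologicalComplex.exactAt_iff' _ 0 1 2 (by simp) (by simp)]
    rw [HomologicalComplex.exactAt_iff_isZero_homology]
    exact hz
  rw [ShortComplex.moduleCat_exact_iff] at hex
  have hFproj : Projective F' := (IsProjective.iff_projective F).mp ‹Module.Projective S F›
  let pr : F' ⟶ Q := ModuleCat.ofHom K.mkQ
  have : Epi pr := (ModuleCat.epi_iff_surjective pr).2 (Submodule.mkQ_surjective K)
  let π : P.complex.X 0 ⟶ Q := P.π.f 0
  haveI : Epi π := inferInstanceAs (Epi (P.π.f 0))
  let α : P.complex.X 0 ⟶ F' := Projective.factorThru π pr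
  let αl : P.complex.X 0 →ₗ[S] F := α.hom
  have hα : ∀ p, pr (αl p) = π p := fun p =>
    LinearMap.congr_fun (congrArg ModuleCat.Hom.hom (Projective.factorThru_comp π pr)) p
  have hβmem : ∀ p : P.complex.X 1, αl (P.complex.d 1 0 p) ∈ K := by
    intro p
    have h0 : π (P.complex.d 1 0 p) = 0 :=
      LinearMap.congr_fun (congrArg ModuleCat.Hom.hom P.complex_d_comp_π_f_zero) p
    have h1 := hα (P.complex.d 1 0 p)
    rw [h0] at h1
    exact (Submodule.Quotient.mk_eq_zero K).mp h1
  let β : P.complex.X 1 →ₗ[S] K :=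
    LinearMap.codRestrict K (αl ∘ₗ (P.complex.d 1 0).hom) hβmem
  let gval : P.complex.X 1 ⟶ M' := ModuleCat.ofHom (f ∘ₗ β : P.complex.X 1 →ₗ[S] M)
  have hcocycle : ((P.complex.linearYonedaObj ℤ M').sc' 0 1 2).g gval = 0 := by
    show ((P.complex.linearYonedaObj ℤ M').d 1 2) gval = 0
    rw [ChainComplex.linearYonedaObj_d]
    show P.complex.d 2 1 ≫ gval = 0
    ext p
    show f (β (P.complex.d 2 1 p)) = 0
    have hβ0 : β (P.complex.d 2 1 p) = 0 := by
      apply Subtype.ext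
      show αl (P.complex.d 1 0 (P.complex.d 2 1 p)) = 0
      have h2 : P.complex.d 1 0 (P.complex.d 2 1 p) = 0 :=
        LinearMap.congr_fun (congrArg ModuleCat.Hom.hom (P.complex.d_comp_d 2 1 0)) p
      rw [h2]; simp
    rw [hβ0]; simp
  obtain ⟨h, hh⟩ := hex gval hcocycle
  have hh' : P.complex.d 1 0 ≫ (h : P.complex.X 0 ⟶ M') = gval := by
    have h3 : ((P.complex.linearYonedaObj ℤ M').d 0 1) h = gval := hh
    rwa [ChainComplex.linearYonedaObj_d] at h3
  let hl : P.complex.X 0 →ₗ[S] M := (h : P.complex.X 0 ⟶ M').hom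
  let γ : F' ⟶ P.complex.X 0 := Projective.factorThru pr π
  let γl : F →ₗ[S] P.complex.X 0 := γ.hom
  have hγ : ∀ x : F, π (γl x) = pr x := fun x =>
    LinearMap.congr_fun (congrArg ModuleCat.Hom.hom (Projective.factorThru_comp pr π)) x
  have hδmem : ∀ x : F, αl (γl x) - x ∈ K := by
    intro x
    apply (Submodule.Quotient.mk_eq_zero K).mp
    have : pr (αl (γl x) - x) = 0 := by
      rw [map_sub, hα, hγ, sub_self]
    exact this
  let δ : F →ₗ[S] K := LinearMap.codRestrict K ((αl ∘ₗ γl) - LinearMap.id) hδmem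
  refine ⟨hl ∘ₗ γl - f ∘ₗ δ, ?_⟩
  rintro ⟨x, hx⟩
  have hxker : π (γl x) = 0 := by
    rw [hγ]
    exact (Submodule.Quotient.mk_eq_zero K).mpr hx
  have hex0 := P.exact₀
  rw [ShortComplex.moduleCat_exact_iff] at hex0
  obtain ⟨p, hdp⟩ := hex0 (γl x) hxker
  have hdp' : P.complex.d 1 0 p = γl x := hdp
  have hval : hl (γl x) = f (β p) := by
    rw [← hdp']
    exact LinearMap.congr_fun (congrArg ModuleCat.Hom.hom hh') p
  have hδx : δ x = β p - ⟨x, hx⟩ := by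
    apply Subtype.ext
    show αl (γl x) - x = αl (P.complex.d 1 0 p) - x
    rw [hdp']
  show hl (γl x) - f (δ x) = f ⟨x, hx⟩
  rw [hval, hδx, map_sub, sub_sub_cancel]

theorem NCaux.ext_lift' (S : Type u) [Ring S] (M F P : Type u) [AddCommGroup M] [Module S M]
    [AddCommGroup F] [Module S F] [AddCommGroup P] [Module S P] [Module.Projective S F]
    (ρ : P →ₗ[S] F) (ψ : P →ₗ[S] M) (hker : LinearMap.ker ρ ≤ LinearMap.ker ψ)
    (hv : ExtVanish S (F ⧸ LinearMap.range ρ) M) :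
    ∃ g : F →ₗ[S] M, g ∘ₗ ρ = ψ := by
  let f : LinearMap.range ρ →ₗ[S] M :=
    ((LinearMap.ker ρ).liftQ ψ hker) ∘ₗ (ρ.quotKerEquivRange).symm.toLinearMap
  obtain ⟨g, hg⟩ := NCaux.ext_lift S M F (LinearMap.range ρ) hv f
  refine ⟨g, LinearMap.ext fun p => ?_⟩
  have h1 : g (ρ p) = f ⟨ρ p, LinearMap.mem_range_self ρ p⟩ :=
    hg ⟨ρ p, LinearMap.mem_range_self ρ p⟩
  have h2 : (ρ.quotKerEquivRange).symm ⟨ρ p, LinearMap.mem_range_self ρ p⟩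
      = Submodule.Quotient.mk p := by
    rw [LinearEquiv.symm_apply_eq]
    exact Subtype.ext (LinearMap.quotKerEquivRange_apply_mk ρ p)
  show g (ρ p) = ψ p
  rw [h1]
  show ((LinearMap.ker ρ).liftQ ψ hker) ((ρ.quotKerEquivRange).symm ⟨ρ p, _⟩) = ψ p
  rw [h2]
  exact Submodule.liftQ_apply _ _ _
end NCauxSec

/-- Proposition 2.3(1): annihilator conditions in a right FP-injective ring. -/
theorem stmt_3 (R : Type u) [Ring R] (h : FPInjective Rᵐᵒᵖ R) :
    (∀ I J : Submodule Rᵐᵒᵖ R, I.FG → J.FG →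
      lAnn R ((I ⊓ J : Submodule Rᵐᵒᵖ R) : Set R) = lAnn R (I : Set R) + lAnn R (J : Set R)) ∧
    (∀ I : Submodule R R, I.FG → (I : Set R) = lAnn R (rAnn R (I : Set R))) := by
  constructor
  · intro I J hI hJ
    apply Set.Subset.antisymm
    · intro a ha
      let ρ : (↥I × ↥J) →ₗ[Rᵐᵒᵖ] R := (I.subtype).coprod (J.subtype)
      let ψ : (↥I × ↥J) →ₗ[Rᵐᵒᵖ] R := (NCaux.lmul a) ∘ₗ I.subtype ∘ₗ (LinearMap.fst Rᵐᵒᵖ ↥I ↥J)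
      have hrange : LinearMap.range ρ = I ⊔ J := by
        rw [LinearMap.range_coprod, Submodule.range_subtype, Submodule.range_subtype]
      have hker : LinearMap.ker ρ ≤ LinearMap.ker ψ := by
        rintro ⟨⟨x, hx⟩, ⟨y, hy⟩⟩ hxy
        have hx0 : x + y = 0 := hxy
        have hxJ : x ∈ J := by
          have hxy' : x = -y := eq_neg_of_add_eq_zero_left hx0
          rw [hxy']; exact J.neg_mem hy
        show a * x = 0
        exact ha x ⟨hx, hxJ⟩
      have hv : ExtVanish Rᵐᵒᵖ (R ⧸ LinearMap.range ρ) R := by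
        apply h
        refine Module.finitePresentation_of_surjective (LinearMap.range ρ).mkQ
          (Submodule.mkQ_surjective _) ?_
        rw [Submodule.ker_mkQ, hrange]
        exact Submodule.FG.sup hI hJ
      obtain ⟨g, hg⟩ := NCaux.ext_lift' Rᵐᵒᵖ R R (↥I × ↥J) ρ ψ hker hv
      have hgx : ∀ x : R, g x = g 1 * x := by
        intro x
        have : g (op x • (1 : R)) = op x • g 1 := map_smul g (op x) 1
        simpa [MulOpposite.smul_eq_mul_unop] using this
      have hbI : ∀ x ∈ I, g 1 * x = a * x := by
        intro x hx
        have := LinearMap.congr_fun hg (⟨x, hx⟩, (0 : ↥J))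
        simpa [ρ, ψ, hgx x] using this
      have hbJ : ∀ y ∈ J, g 1 * y = 0 := by
        intro y hy
        have := LinearMap.congr_fun hg ((0 : ↥I), ⟨y, hy⟩)
        simpa [ρ, ψ, hgx y] using this
      refine Set.mem_add.mpr ⟨a - g 1, ?_, g 1, ?_, sub_add_cancel a (g 1)⟩
      · intro x hx
        rw [sub_mul, hbI x hx, sub_self]
      · exact hbJ
    · rintro s hs
      obtain ⟨u, hu, v, hv, rfl⟩ := Set.mem_add.mp hs
      intro x hx
      rw [add_mul, hu x hx.1, hv x hx.2, add_zero]
  · intro I hI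
    apply Set.Subset.antisymm
    · intro c hc z hz
      exact hz c hc
    · intro c hc
      obtain ⟨n, a, ha⟩ := Submodule.fg_iff_exists_fin_generating_family.mp hI
      let ρ : R →ₗ[Rᵐᵒᵖ] (Fin n → R) := LinearMap.pi (fun i => NCaux.lmul (a i))
      let ψ : R →ₗ[Rᵐᵒᵖ] R := NCaux.lmul c
      have hker : LinearMap.ker ρ ≤ LinearMap.ker ψ := by
        intro x hx
        have hx' : ∀ i, a i * x = 0 := fun i => congrFun (show ρ x = 0 from hx) i
        have hxr : x ∈ rAnn R (I : Set R) := by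
          intro y hy
          rw [← ha] at hy
          induction hy using Submodule.span_induction with
          | mem y hy => obtain ⟨i, rfl⟩ := hy; exact hx' i
          | zero => simp
          | add y z _ _ hy hz => rw [add_mul, hy, hz, add_zero]
          | smul r y _ hy => rw [smul_eq_mul, mul_assoc, hy, mul_zero]
        show c * x = 0
        exact hc x hxr
      have hrng : LinearMap.range ρ = Submodule.span Rᵐᵒᵖ {ρ 1} := by
        apply le_antisymm
        · rintro _ ⟨x, rfl⟩
          have : ρ x = op x • ρ 1 := by
            funext i
            show a i * x = (a i * 1) * x
            rw [mul_one]
          rw [this]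
          exact Submodule.smul_mem _ _ (Submodule.mem_span_singleton_self _)
        · rw [Submodule.span_singleton_le_iff_mem]
          exact LinearMap.mem_range_self ρ 1
      have hv : ExtVanish Rᵐᵒᵖ ((Fin n → R) ⧸ LinearMap.range ρ) R := by
        apply h
        have : Module.FinitePresentation Rᵐᵒᵖ (Fin n → R) :=
          Module.finitePresentation_of_projective _ _
        refine Module.finitePresentation_of_surjective (LinearMap.range ρ).mkQ
          (Submodule.mkQ_surjective _) ?_
        rw [Submodule.ker_mkQ, hrng]
        exact Submodule.fg_span_singleton _
      obtain ⟨g, hg⟩ := NCaux.ext_lift' Rᵐᵒᵖ R (Fin n → R) R ρ ψ hker hv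
      have hc1 : c = g (ρ 1) := by
        have := LinearMap.congr_fun hg 1
        simp only [ψ, NCaux.lmul_apply, mul_one] at this
        rw [← this]; rfl
      have hρ1 : ρ 1 = ∑ i, Pi.single i (a i * 1) := by
        rw [Finset.univ_sum_single (f := fun i => a i * 1)]
        rfl
      rw [hc1, hρ1, map_sum]
      apply Submodule.sum_mem
      intro i _
      have hsingle : Pi.single i (a i * 1) = op (a i) • (Pi.single i (1 : R) : Fin n → R) := by
        funext j
        rw [Pi.smul_apply, MulOpposite.smul_eq_mul_unop, unop_op]
        rcases eq_or_ne j i with rfl | hne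
        · simp
        · simp [Pi.single_apply, hne]
      rw [hsingle, map_smul, MulOpposite.smul_eq_mul_unop, unop_op]
      have hai : a i ∈ I := by
        rw [← ha]
        exact Submodule.subset_span ⟨i, rfl⟩
      exact I.smul_mem (g (Pi.single i (1:R))) hai
end

section
/- If R is a ring such that (a) for arbitrary finitely generated right ideals I, J of R one has l(I ∩ J) = l(I) + l(J), and (b) for every finitely generated left ideal I of R one has I = l(r(I)), then every homomorphism of right R-modules from a finitely generated right ideal of R into R extends to a homomorphism R → R. -/
/-!
Common definitions: rings are associative with identity, not necessarily commutative.
Left `R`-modules are `Module R M`; right `R`-modules are `Module Rᵐᵒᵖ M`.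
-/

universe u

open MulOpposite Function Pointwise

/-- Proposition 2.3(2): under the annihilator conditions, every homomorphism from a finitely
generated right ideal of `R` into `R` extends to `R`. -/
theorem stmt_4 (R : Type u) [Ring R]
    (ha : ∀ I J : Submodule Rᵐᵒᵖ R, I.FG → J.FG →
      lAnn R ((I ⊓ J : Submodule Rᵐᵒᵖ R) : Set R) = lAnn R (I : Set R) + lAnn R (J : Set R))
    (hb : ∀ I : Submodule R R, I.FG → (I : Set R) = lAnn R (rAnn R (I : Set R))) :
    ∀ (I : Submodule Rᵐᵒᵖ R), I.FG → ∀ f : I →ₗ[Rᵐᵒᵖ] R,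
      ∃ g : R →ₗ[Rᵐᵒᵖ] R, g ∘ₗ I.subtype = f := by
  have key : ∀ I : Submodule Rᵐᵒᵖ R, I.FG →
      ∀ f : I →ₗ[Rᵐᵒᵖ] R, ∃ c : R, ∀ x (hx : x ∈ I), f ⟨x, hx⟩ = c * x := by
    intro I hIfg
    refine (Submodule.fg_induction (R := Rᵐᵒᵖ) (M := R)
      (motive := fun N _ => N.FG ∧ ∀ f : N →ₗ[Rᵐᵒᵖ] R, ∃ c : R, ∀ x (hx : x ∈ N), f ⟨x, hx⟩ = c * x)
      ?_ ?_ I hIfg).2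
    · -- principal right ideal
      intro a
      refine ⟨Submodule.fg_span_singleton a, fun f => ?_⟩
      have haI : a ∈ Submodule.span Rᵐᵒᵖ ({a} : Set R) :=
        Submodule.mem_span_singleton_self a
      set b : R := f ⟨a, haI⟩ with hbdef
      have hbmem : b ∈ lAnn R (rAnn R ((Submodule.span R ({a} : Set R) :
          Submodule R R) : Set R)) := by
        intro s hs
        have has : a * s = 0 := hs a (Submodule.mem_span_singleton_self a)
        have h0 : (MulOpposite.op s • (⟨a, haI⟩ : Submodule.span Rᵐᵒᵖ ({a} : Set R))) = 0 := by
          ext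
          simpa [op_smul_eq_mul] using has
        calc b * s = MulOpposite.op s • b := (op_smul_eq_mul s b).symm
          _ = f (MulOpposite.op s • ⟨a, haI⟩) := (f.map_smul _ _).symm
          _ = f 0 := by rw [h0]
          _ = 0 := map_zero f
      rw [← hb (Submodule.span R ({a} : Set R)) (Submodule.fg_span_singleton a)] at hbmem
      obtain ⟨c, hc⟩ := Submodule.mem_span_singleton.mp hbmem
      refine ⟨c, fun x hx => ?_⟩
      obtain ⟨r, rfl⟩ := Submodule.mem_span_singleton.mp hx
      have : (⟨r • a, hx⟩ : Submodule.span Rᵐᵒᵖ ({a} : Set R)) = r • ⟨a, haI⟩ :=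
        Subtype.ext rfl
      rw [this, f.map_smul]
      have hca : c * a = b := by simpa [smul_eq_mul] using hc
      rw [← hbdef, MulOpposite.smul_eq_mul_unop, MulOpposite.smul_eq_mul_unop, ← hca,
        mul_assoc]
    · -- sup of two right ideals
      rintro M₁ M₂ - - ⟨h₁fg, h₁⟩ ⟨h₂fg, h₂⟩
      refine ⟨h₁fg.sup h₂fg, fun f => ?_⟩
      obtain ⟨c₁, hc₁⟩ := h₁ (f ∘ₗ Submodule.inclusion le_sup_left)
      obtain ⟨c₂, hc₂⟩ := h₂ (f ∘ₗ Submodule.inclusion le_sup_right)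
      have hdiff : c₁ - c₂ ∈ lAnn R ((M₁ ⊓ M₂ : Submodule Rᵐᵒᵖ R) : Set R) := by
        intro x hx
        have hx1 : x ∈ M₁ := hx.1
        have hx2 : x ∈ M₂ := hx.2
        have e1 : f ⟨x, Submodule.mem_sup_left hx1⟩ = c₁ * x := hc₁ x hx1
        have e2 : f ⟨x, Submodule.mem_sup_right hx2⟩ = c₂ * x := hc₂ x hx2
        have : f ⟨x, Submodule.mem_sup_left hx1⟩ = f ⟨x, Submodule.mem_sup_right hx2⟩ := rfl
        rw [sub_mul, ← e1, ← e2, this, sub_self]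
      rw [ha M₁ M₂ h₁fg h₂fg] at hdiff
      obtain ⟨u, hu, v, hv, huv⟩ := hdiff
      have hc : c₁ - u = c₂ + v := by
        have huv' : u + v = c₁ - c₂ := huv
        have h1 : c₁ = c₂ + (u + v) := by rw [huv']; abel
        rw [h1]; abel
      refine ⟨c₁ - u, fun z hz => ?_⟩
      obtain ⟨x, hx, y, hy, rfl⟩ := Submodule.mem_sup.mp hz
      have hsplit : (⟨x + y, hz⟩ : (M₁ ⊔ M₂ : Submodule Rᵐᵒᵖ R)) =
          ⟨x, Submodule.mem_sup_left hx⟩ + ⟨y, Submodule.mem_sup_right hy⟩ := rfl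
      rw [hsplit, map_add]
      have e1 : f ⟨x, Submodule.mem_sup_left hx⟩ = c₁ * x := hc₁ x hx
      have e2 : f ⟨y, Submodule.mem_sup_right hy⟩ = c₂ * y := hc₂ y hy
      have hux : u * x = 0 := hu x hx
      have hvy : v * y = 0 := hv y hy
      rw [e1, e2, mul_add, sub_mul, hux, sub_zero, hc, add_mul, hvy, add_zero]
  intro I hIfg f
  obtain ⟨c, hc⟩ := key I hIfg f
  refine ⟨⟨⟨fun x => c * x, fun x y => mul_add c x y⟩, fun r x => ?_⟩, ?_⟩
  · simp [MulOpposite.smul_eq_mul_unop, mul_assoc]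
  · ext ⟨x, hx⟩
    exact (hc x hx).symm
end

section
/- Let R be a right coherent ring such that (a) for arbitrary finitely generated right ideals I, J of R one has l(I ∩ J) = l(I) + l(J), and (b) for every finitely generated left ideal I of R one has I = l(r(I)). Then R is right FP-injective. -/
/-!
Common definitions: rings are associative with identity, not necessarily commutative.
Left `R`-modules are `Module R M`; right `R`-modules are `Module Rᵐᵒᵖ M`.
-/

universe u

open MulOpposite Function Pointwise

section Aux
namespace StmtFive
universe v w
open CategoryTheory Limits Projective
noncomputable section
variable {C : Type w} [Category.{v} C] [Abelian C] [EnoughProjectives C]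

/-- A projective resolution with prescribed bottom. -/
def resComplex {Z P0 P1 : C} (π : P0 ⟶ Z) (d : P1 ⟶ P0) (_ : d ≫ π = 0) : ChainComplex C ℕ :=
  ChainComplex.mk' P0 P1 d (fun {X₀ X₁} f => ⟨_, Projective.d f, (Category.assoc _ _ _).trans ((congrArg (fun g => Projective.π (kernel f) ≫ g) (kernel.condition f)).trans comp_zero)⟩)

lemma resComplex_d_1_0 {Z P0 P1 : C} (π : P0 ⟶ Z) (d : P1 ⟶ P0) (hd : d ≫ π = 0) :
    (resComplex π d hd).d 1 0 = d := by
  simp [resComplex]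

lemma resComplex_exactAt_succ {Z P0 P1 : C} (π : P0 ⟶ Z) (d : P1 ⟶ P0) (hd : d ≫ π = 0)
    (n : ℕ) : (resComplex π d hd).ExactAt (n + 1) := by
  rw [HomologicalComplex.exactAt_iff' _ (n + 1 + 1) (n + 1) n (by simp) (by simp)]
  refine (ShortComplex.exact_iff_of_iso (S₁ := (resComplex π d hd).sc' (n + 1 + 1) (n + 1) n)
    (S₂ := ShortComplex.mk (Projective.d ((resComplex π d hd).d (n + 1) n)) ((resComplex π d hd).d (n + 1) n)
      ((Category.assoc _ _ _).trans ((congrArg (fun g => Projective.π (kernel _) ≫ g) (kernel.condition _)).trans comp_zero)))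
    (ShortComplex.isoMk (ChainComplex.mk'XIso P0 P1 d (fun {X₀ X₁} f => ⟨_, Projective.d f, (Category.assoc _ _ _).trans ((congrArg (fun g => Projective.π (kernel f) ≫ g) (kernel.condition f)).trans comp_zero)⟩) n)
      (Iso.refl _) (Iso.refl _)
      ((ChainComplex.mk'_d P0 P1 d (fun {X₀ X₁} f => ⟨_, Projective.d f, (Category.assoc _ _ _).trans ((congrArg (fun g => Projective.π (kernel f) ≫ g) (kernel.condition f)).trans comp_zero)⟩) n).symm.trans (Category.comp_id ((resComplex π d hd).d (n + 1 + 1) (n + 1))).symm)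
      ((Category.id_comp ((resComplex π d hd).d (n + 1) n)).trans (Category.comp_id ((resComplex π d hd).d (n + 1) n)).symm))).2 (exact_d_f _)

instance resComplex_projective {Z P0 P1 : C} (π : P0 ⟶ Z) (d : P1 ⟶ P0) (hd : d ≫ π = 0)
    [Projective P0] [Projective P1] (n : ℕ) : Projective ((resComplex π d hd).X n) := by
  obtain (_ | _ | _ | n) := n
  · exact (inferInstance : Projective P0)
  · exact (inferInstance : Projective P1)
  · apply Projective.projective_over
  · apply Projective.projective_over

/-- A projective resolution from a prescribed beginning. -/
def resOf {Z P0 P1 : C} (π : P0 ⟶ Z) [Epi π] [Projective P0] [Projective P1]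
    (d : P1 ⟶ P0) (hd : d ≫ π = 0) (hexact : (ShortComplex.mk d π hd).Exact) :
    ProjectiveResolution Z where
  complex := resComplex π d hd
  projective := resComplex_projective π d hd
  π := (ChainComplex.toSingle₀Equiv _ _).symm ⟨π, by
        rw [resComplex_d_1_0]; exact hd⟩
  quasiIso := ⟨fun n => by
    cases n
    · rw [ChainComplex.quasiIsoAt₀_iff, ShortComplex.quasiIso_iff_of_zeros']
      · refine (ShortComplex.exact_and_epi_g_iff_of_iso ?_).2 ⟨hexact, inferInstance⟩
        refine ShortComplex.isoMk (Iso.refl _) (Iso.refl _) (Iso.refl _) ?_ ?_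
        · dsimp
          exact (Category.id_comp _).trans ((resComplex_d_1_0 π d hd).symm.trans (Category.comp_id _).symm)
        · dsimp
          refine (Category.id_comp π).trans (Eq.trans ?_ (Category.comp_id _).symm)
          exact (ChainComplex.toSingle₀Equiv_symm_apply_f_zero (C := resComplex π d hd) (X := Z) π _).symm
      all_goals first | rfl | exact HomologicalComplex.shape _ _ _ (by simp)
    · rw [quasiIsoAt_iff_exactAt']
      · apply resComplex_exactAt_succ
      · apply ChainComplex.exactAt_succ_single_obj⟩

variable {R : Type u} [Ring R]

/-- Left multiplication by `c` as a map of right `R`-modules. -/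
def mulLeftS (c : R) : R →ₗ[Rᵐᵒᵖ] R where
  toFun x := c * x
  map_add' := mul_add c
  map_smul' r x := by
    show c * (x * r.unop) = (c * x) * r.unop
    rw [mul_assoc]

@[simp] lemma mulLeftS_apply (c x : R) : mulLeftS c x = c * x := rfl

/-- Lemma A: P-injectivity from condition (b). -/
lemma lemA (hb : ∀ I : Submodule R R, I.FG → (I : Set R) = lAnn R (rAnn R (I : Set R)))
    (a : R) (γ : (Submodule.span Rᵐᵒᵖ {a} : Submodule Rᵐᵒᵖ R) →ₗ[Rᵐᵒᵖ] R) :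
    ∃ c : R, ∀ x (hx : x ∈ Submodule.span Rᵐᵒᵖ ({a} : Set R)), γ ⟨x, hx⟩ = c * x := by
  have haT : a ∈ Submodule.span Rᵐᵒᵖ ({a} : Set R) := Submodule.subset_span rfl
  let abar : (Submodule.span Rᵐᵒᵖ {a} : Submodule Rᵐᵒᵖ R) := ⟨a, haT⟩
  have key : γ abar ∈ lAnn R (rAnn R ((Submodule.span R {a} : Submodule R R) : Set R)) := by
    intro t ht
    have hat : a * t = 0 := ht a (Submodule.subset_span rfl)
    have : (op t : Rᵐᵒᵖ) • abar = 0 := by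
      apply Subtype.ext
      show a * t = 0
      exact hat
    calc γ abar * t = (op t : Rᵐᵒᵖ) • γ abar := rfl
      _ = γ ((op t : Rᵐᵒᵖ) • abar) := (γ.map_smul _ _).symm
      _ = 0 := by rw [this, map_zero]
  rw [← hb _ (⟨{a}, by simp⟩)] at key
  obtain ⟨c, hc⟩ := Submodule.mem_span_singleton.mp key
  refine ⟨c, fun x hx => ?_⟩
  obtain ⟨r, hr⟩ := Submodule.mem_span_singleton.mp hx
  have hxr : (⟨x, hx⟩ : (Submodule.span Rᵐᵒᵖ {a} : Submodule Rᵐᵒᵖ R)) = r • abar := by apply Subtype.ext; exact hr.symm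
  rw [hxr, γ.map_smul]
  show γ abar * r.unop = c * x
  rw [← hc]
  show c • a * r.unop = c * x
  rw [← hr]
  show c * a * r.unop = c * (a * r.unop)
  rw [mul_assoc]

/-- Extension property for maps from finitely generated right ideals. -/
lemma lemB
    (ha : ∀ I J : Submodule Rᵐᵒᵖ R, I.FG → J.FG →
      lAnn R ((I ⊓ J : Submodule Rᵐᵒᵖ R) : Set R) = lAnn R (I : Set R) + lAnn R (J : Set R))
    (hb : ∀ I : Submodule R R, I.FG → (I : Set R) = lAnn R (rAnn R (I : Set R)))
    (T : Submodule Rᵐᵒᵖ R) (hT : T.FG) (γ : T →ₗ[Rᵐᵒᵖ] R) :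
    ∃ c : R, ∀ x (hx : x ∈ T), γ ⟨x, hx⟩ = c * x := by
  classical
  obtain ⟨s, hs⟩ := hT
  induction s using Finset.induction generalizing T γ with
  | empty =>
      refine ⟨0, fun x hx => ?_⟩
      have : x = 0 := by
        rw [← hs] at hx; simpa using hx
      subst this
      have : (⟨(0:R), hx⟩ : T) = 0 := rfl
      rw [this, map_zero, zero_mul]
  | @insert a s ha' IH =>
      -- T = span {a} ⊔ span s
      have hT1 : Submodule.span Rᵐᵒᵖ (s : Set R) ≤ T := by
        rw [← hs]; exact Submodule.span_mono (by simp [Finset.coe_insert, Set.subset_insert])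
      have hT2 : Submodule.span Rᵐᵒᵖ ({a} : Set R) ≤ T := by
        rw [← hs]; exact Submodule.span_mono (by simp [Finset.coe_insert])
      obtain ⟨c₁, hc₁⟩ := IH (Submodule.span Rᵐᵒᵖ (s : Set R))
        (γ.comp (Submodule.inclusion hT1)) rfl
      have hc₁' : ∀ x (hx : x ∈ Submodule.span Rᵐᵒᵖ (s : Set R)),
          γ ⟨x, hT1 hx⟩ = c₁ * x := fun x hx => hc₁ x hx
      -- the defect on span {a}
      set T₂ := Submodule.span Rᵐᵒᵖ ({a} : Set R) with hT₂def
      let δ : T₂ →ₗ[Rᵐᵒᵖ] R := γ.comp (Submodule.inclusion hT2) - (mulLeftS c₁).comp T₂.subtype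
      obtain ⟨c₂, hc₂⟩ := lemA hb a δ
      have hc₂' : ∀ x (hx : x ∈ T₂), γ ⟨x, hT2 hx⟩ = c₁ * x + c₂ * x := by
        intro x hx
        have := hc₂ x hx
        simp only [δ, LinearMap.sub_apply, LinearMap.comp_apply, mulLeftS_apply,
          Submodule.coe_subtype] at this
        have h2 : γ (Submodule.inclusion hT2 ⟨x, hx⟩) = γ ⟨x, hT2 hx⟩ := rfl
        rw [h2] at this
        rw [sub_eq_iff_eq_add'] at this
        exact this
      -- c₂ kills T₁ ⊓ T₂
      have hkill : c₂ ∈ lAnn R ((Submodule.span Rᵐᵒᵖ (s : Set R) ⊓ T₂ : Submodule Rᵐᵒᵖ R) : Set R) := by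
        intro x hx
        obtain ⟨hx1, hx2⟩ := hx
        have e1 := hc₁' x hx1
        have e2 := hc₂' x hx2
        have : γ ⟨x, hT1 hx1⟩ = γ ⟨x, hT2 hx2⟩ := rfl
        rw [this, e2] at e1
        exact (add_eq_left (a := c₁ * x)).mp e1
      rw [ha _ _ ⟨s, rfl⟩ ⟨{a}, by rw [hT₂def]; simp⟩] at hkill
      obtain ⟨u, hu, v, hv, huv⟩ := Set.mem_add.mp hkill
      refine ⟨c₁ + u, fun x hx => ?_⟩
      have hx' : x ∈ T₂ ⊔ Submodule.span Rᵐᵒᵖ (s : Set R) := by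
        rw [hT₂def, ← Submodule.span_insert, ← Finset.coe_insert, hs]; exact hx
      obtain ⟨y, hy, z, hz, hyz⟩ := Submodule.mem_sup.mp hx'
      have hyT : y ∈ T := hT2 hy
      have hzT : z ∈ T := hT1 hz
      have hsplit : (⟨x, hx⟩ : T) = (⟨y, hyT⟩ : T) + ⟨z, hzT⟩ := by
        apply Subtype.ext; exact hyz.symm
      have huz : u * z = 0 := hu z hz
      have hvy : v * y = 0 := hv y hy
      have huy : u * y = c₂ * y := by
        have : (u + v) * y = c₂ * y := by rw [huv]
        rwa [add_mul, hvy, add_zero] at this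
      rw [hsplit, map_add]
      have hgy : γ ⟨y, hyT⟩ = c₁ * y + c₂ * y := hc₂' y hy
      have hgz : γ ⟨z, hzT⟩ = c₁ * z := hc₁' z hz
      rw [hgy, hgz, ← hyz]
      rw [add_mul, mul_add, mul_add, huz, huy]
      rw [add_zero]
      abel

/-- Extension property for maps from f.g. submodules of finite free right modules. -/
lemma lemC (hcoh : RightCoherent R)
    (ha : ∀ I J : Submodule Rᵐᵒᵖ R, I.FG → J.FG →
      lAnn R ((I ⊓ J : Submodule Rᵐᵒᵖ R) : Set R) = lAnn R (I : Set R) + lAnn R (J : Set R))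
    (hb : ∀ I : Submodule R R, I.FG → (I : Set R) = lAnn R (rAnn R (I : Set R))) :
    ∀ (n : ℕ) (K : Submodule Rᵐᵒᵖ (Fin n → R)) (_ : K.FG) (γ : K →ₗ[Rᵐᵒᵖ] R),
      ∃ Γ : (Fin n → R) →ₗ[Rᵐᵒᵖ] R, ∀ x (hx : x ∈ K), Γ x = γ ⟨x, hx⟩ := by
  intro n
  induction n with
  | zero =>
      intro K _ γ
      refine ⟨0, fun x hx => ?_⟩
      have hx0 : x = 0 := Subsingleton.elim _ _
      have : (⟨x, hx⟩ : K) = 0 := Subtype.ext hx0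
      rw [this, map_zero]
      rfl
  | succ n IH =>
      intro K hK γ
      let p : (Fin (n+1) → R) →ₗ[Rᵐᵒᵖ] R := LinearMap.proj 0
      let q : (Fin (n+1) → R) →ₗ[Rᵐᵒᵖ] (Fin n → R) := LinearMap.funLeft Rᵐᵒᵖ R Fin.succ
      let I : Submodule Rᵐᵒᵖ R := Submodule.map p K
      have hIfg : I.FG := hK.map p
      have hIfp : Module.FinitePresentation Rᵐᵒᵖ I := hcoh I hIfg
      haveI : Module.Finite Rᵐᵒᵖ K := Module.Finite.iff_fg.mpr hK
      -- the surjection f' : K → I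
      let f' : K →ₗ[Rᵐᵒᵖ] I := (p ∘ₗ K.subtype).codRestrict I
        (fun c => Submodule.mem_map_of_mem c.2)
      have hf'surj : Function.Surjective f' := by
        rintro ⟨y, hy⟩
        obtain ⟨x, hx, rfl⟩ := hy
        exact ⟨⟨x, hx⟩, rfl⟩
      haveI : Module.FinitePresentation Rᵐᵒᵖ I := hIfp
      have hkerfg : (LinearMap.ker f').FG := Module.FinitePresentation.fg_ker f' hf'surj
      -- K' = K ⊓ ker p
      let K' : Submodule Rᵐᵒᵖ (Fin (n+1) → R) := K ⊓ LinearMap.ker p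
      have hK'eq : Submodule.map K.subtype (LinearMap.ker f') = K' := by
        have : LinearMap.ker f' = Submodule.comap K.subtype (LinearMap.ker p) := by
          ext x
          constructor
          · intro hx
            have : p x.1 = 0 := congrArg Subtype.val hx
            exact this
          · intro hx
            exact Subtype.ext hx
        rw [this, Submodule.map_comap_subtype]
      have hK'fg : K'.FG := hK'eq ▸ hkerfg.map K.subtype
      -- K'' = q(K')
      let K'' : Submodule Rᵐᵒᵖ (Fin n → R) := Submodule.map q K'
      have hK''fg : K''.FG := hK'fg.map q
      -- the iso K' ≃ K''
      let g : K' →ₗ[Rᵐᵒᵖ] K'' := (q ∘ₗ K'.subtype).codRestrict K''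
        (fun c => Submodule.mem_map_of_mem c.2)
      have hginj : Function.Injective g := by
        intro x y hxy
        apply Subtype.ext
        funext i
        have htail : q x.1 = q y.1 := congrArg Subtype.val hxy
        have hx0 : x.1 0 = 0 := x.2.2
        have hy0 : y.1 0 = 0 := y.2.2
        rcases Fin.eq_zero_or_eq_succ i with rfl | ⟨j, rfl⟩
        · rw [hx0, hy0]
        · exact congrFun htail j
      have hgsurj : Function.Surjective g := by
        rintro ⟨y, hy⟩
        obtain ⟨x, hx, rfl⟩ := hy
        exact ⟨⟨x, hx⟩, rfl⟩
      let e : K' ≃ₗ[Rᵐᵒᵖ] K'' := LinearEquiv.ofBijective g ⟨hginj, hgsurj⟩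
      let γ' : K' →ₗ[Rᵐᵒᵖ] R := γ ∘ₗ Submodule.inclusion (inf_le_left : K' ≤ K)
      obtain ⟨Γ'', hΓ''⟩ := IH K'' hK''fg (γ' ∘ₗ (e.symm : K'' →ₗ[Rᵐᵒᵖ] K'))
      -- the defect δ on K
      let δ : K →ₗ[Rᵐᵒᵖ] R := γ - (Γ'' ∘ₗ q ∘ₗ K.subtype)
      have hδker : LinearMap.ker f' ≤ LinearMap.ker δ := by
        intro x hxker
        have hp0 : p x.1 = 0 := congrArg Subtype.val hxker
        have hxK' : x.1 ∈ K' := ⟨x.2, hp0⟩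
        have hqmem : q x.1 ∈ K'' := Submodule.mem_map_of_mem hxK'
        have he : e ⟨x.1, hxK'⟩ = ⟨q x.1, hqmem⟩ := rfl
        have hsymm : e.symm ⟨q x.1, hqmem⟩ = ⟨x.1, hxK'⟩ := by
          rw [← he, LinearEquiv.symm_apply_apply]
        have h1 : Γ'' (q x.1) = γ' ⟨x.1, hxK'⟩ := by
          rw [hΓ'' (q x.1) hqmem]
          show γ' (e.symm ⟨q x.1, hqmem⟩) = _
          rw [hsymm]
        have h2 : γ' ⟨x.1, hxK'⟩ = γ x := rfl
        show δ x = 0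
        simp only [δ, LinearMap.sub_apply, LinearMap.comp_apply, Submodule.coe_subtype]
        rw [h1, h2, sub_self]
      -- factor δ through I
      let ebar : (K ⧸ LinearMap.ker f') ≃ₗ[Rᵐᵒᵖ] I := f'.quotKerEquivOfSurjective hf'surj
      let δbar : I →ₗ[Rᵐᵒᵖ] R := ((LinearMap.ker f').liftQ δ hδker) ∘ₗ (ebar.symm : I →ₗ[Rᵐᵒᵖ] (K ⧸ LinearMap.ker f'))
      have hδbar : ∀ x : K, δbar (f' x) = δ x := by
        intro x
        have : ebar.symm (f' x) = Submodule.Quotient.mk x := by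
          apply ebar.injective
          rw [LinearEquiv.apply_symm_apply]
          rfl
        show ((LinearMap.ker f').liftQ δ hδker) (ebar.symm (f' x)) = δ x
        rw [this]
        rfl
      obtain ⟨c, hc⟩ := lemB ha hb I hIfg δbar
      refine ⟨Γ'' ∘ₗ q + (mulLeftS c) ∘ₗ p, fun x hx => ?_⟩
      have hpx : p x ∈ I := Submodule.mem_map_of_mem hx
      have hfx : f' ⟨x, hx⟩ = ⟨p x, hpx⟩ := rfl
      have h3 : c * p x = δ ⟨x, hx⟩ := by
        rw [← hc (p x) hpx, ← hfx, hδbar]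
      show Γ'' (q x) + c * p x = γ ⟨x, hx⟩
      rw [h3]
      show Γ'' (q x) + (γ ⟨x, hx⟩ - Γ'' (q x)) = γ ⟨x, hx⟩
      abel

noncomputable section Main
open CategoryTheory Limits
variable {R : Type u} [Ring R]

/-- `R` as a right module over itself is isomorphic to `Rᵐᵒᵖ`. -/
def opEquiv' : R ≃ₗ[Rᵐᵒᵖ] Rᵐᵒᵖ where
  toFun := MulOpposite.op
  invFun := MulOpposite.unop
  left_inv x := rfl
  right_inv x := rfl
  map_add' x y := rfl
  map_smul' r x := by
    show MulOpposite.op (x * r.unop) = r * MulOpposite.op x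
    rfl

def piOpEquiv (k : ℕ) : (Fin k → R) ≃ₗ[Rᵐᵒᵖ] (Fin k → Rᵐᵒᵖ) :=
  LinearEquiv.piCongrRight fun _ => opEquiv'

instance finFreeFinite (k : ℕ) : Module.Finite Rᵐᵒᵖ (Fin k → R) :=
  Module.Finite.equiv (piOpEquiv k).symm

def finFreeBasis (k : ℕ) : Module.Basis (Fin k) Rᵐᵒᵖ (Fin k → R) :=
  (Pi.basisFun Rᵐᵒᵖ (Fin k)).map (piOpEquiv k).symm

lemma subsingleton_of_isZero {M : ModuleCat.{u} ℤ} (h : IsZero M) : Subsingleton M := by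
  have hid : 𝟙 M = 0 := h.eq_of_src _ _
  constructor
  intro a b
  have : ∀ x : M, x = 0 := by
    intro x
    have h1 : (𝟙 M : M ⟶ M) x = ((0 : M ⟶ M) : M ⟶ M) x := by rw [hid]
    simpa using h1
  rw [this a, this b]

theorem auxmain (hcoh : RightCoherent R)
    (ha : ∀ I J : Submodule Rᵐᵒᵖ R, I.FG → J.FG →
      lAnn R ((I ⊓ J : Submodule Rᵐᵒᵖ R) : Set R) = lAnn R (I : Set R) + lAnn R (J : Set R))
    (hb : ∀ I : Submodule R R, I.FG → (I : Set R) = lAnn R (rAnn R (I : Set R)))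
    (F : Type u) [AddCommGroup F] [Module Rᵐᵒᵖ F] (hFP : Module.FinitePresentation Rᵐᵒᵖ F) :
    Subsingleton (((Ext ℤ (ModuleCat.{u} Rᵐᵒᵖ) 1).obj
      (Opposite.op (ModuleCat.of Rᵐᵒᵖ F))).obj (ModuleCat.of Rᵐᵒᵖ R)) := by
  classical
  haveI := hFP
  -- a finite free presentation
  obtain ⟨n, ℓ, hℓ⟩ := Module.Finite.exists_fin' Rᵐᵒᵖ F
  let π0 : (Fin n → R) →ₗ[Rᵐᵒᵖ] F := ℓ ∘ₗ (piOpEquiv n).toLinearMap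
  have hπ0 : Function.Surjective π0 := hℓ.comp (piOpEquiv n).surjective
  let K0 : Submodule Rᵐᵒᵖ (Fin n → R) := LinearMap.ker π0
  have hK0fg : K0.FG := Module.FinitePresentation.fg_ker π0 hπ0
  haveI : Module.Finite Rᵐᵒᵖ K0 := Module.Finite.iff_fg.mpr hK0fg
  obtain ⟨m, u, hu⟩ := Module.Finite.exists_fin' Rᵐᵒᵖ K0
  let d0 : (Fin m → R) →ₗ[Rᵐᵒᵖ] (Fin n → R) :=
    K0.subtype ∘ₗ u ∘ₗ (piOpEquiv m).toLinearMap
  have hd0range : LinearMap.range d0 = K0 := by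
    apply le_antisymm
    · rintro _ ⟨x, rfl⟩
      exact (u ((piOpEquiv m) x)).2
    · intro y hy
      obtain ⟨z, hz⟩ := hu ⟨y, hy⟩
      exact ⟨(piOpEquiv m).symm z, by
        show K0.subtype (u ((piOpEquiv m) ((piOpEquiv m).symm z))) = y
        rw [LinearEquiv.apply_symm_apply, hz]
        rfl⟩
      -- (closes)
  -- set up the category objects
  let X0 : ModuleCat.{u} Rᵐᵒᵖ := ModuleCat.of Rᵐᵒᵖ (Fin n → R)
  let X1 : ModuleCat.{u} Rᵐᵒᵖ := ModuleCat.of Rᵐᵒᵖ (Fin m → R)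
  let FC : ModuleCat.{u} Rᵐᵒᵖ := ModuleCat.of Rᵐᵒᵖ F
  let πC : X0 ⟶ FC := ModuleCat.ofHom π0
  let dC : X1 ⟶ X0 := ModuleCat.ofHom d0
  haveI : Epi πC := (ModuleCat.epi_iff_surjective πC).mpr hπ0
  haveI : Projective X0 := ModuleCat.projective_of_free (finFreeBasis n)
  haveI : Projective X1 := ModuleCat.projective_of_free (finFreeBasis m)
  have hd : dC ≫ πC = 0 := by
    apply ModuleCat.hom_ext; apply LinearMap.ext; intro x
    show π0 (d0 x) = 0
    have : d0 x ∈ K0 := (u ((piOpEquiv m) x)).2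
    exact this
  have hexact : (ShortComplex.mk dC πC hd).Exact := by
    rw [ShortComplex.moduleCat_exact_iff]
    intro x hx
    have hxK : x ∈ K0 := hx
    rw [← hd0range] at hxK
    obtain ⟨y, hy⟩ := hxK
    exact ⟨y, hy⟩
  let P : ProjectiveResolution FC := resOf πC dC hd hexact
  have hPc : P.complex = resComplex πC dC hd := rfl
  -- exactness of the Hom complex at 1
  have hex : (P.complex.linearYonedaObj ℤ (ModuleCat.of Rᵐᵒᵖ R)).ExactAt 1 := by
    rw [HomologicalComplex.exactAt_iff' _ 0 1 2 (by simp) (by simp)]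
    rw [ShortComplex.moduleCat_exact_iff]
    intro φ hφ
    let φ1 : X1 ⟶ ModuleCat.of Rᵐᵒᵖ R := φ
    have hφ' : P.complex.d 2 1 ≫ φ1 = 0 := hφ
    have h10 : (resComplex πC dC hd).d 1 0 = dC := resComplex_d_1_0 πC dC hd
    -- concrete exactness of the resolution at degree 1
    have hex1 := resComplex_exactAt_succ πC dC hd 0
    rw [HomologicalComplex.exactAt_iff' _ 2 1 0 (by simp) (by simp),
      ShortComplex.moduleCat_exact_iff] at hex1
    -- φ as a linear map kills the kernel of d0
    have hker : ∀ x : Fin m → R, d0 x = 0 → φ1 x = 0 := by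
      intro x hx
      have hx' : (resComplex πC dC hd).d 1 0 x = 0 := by rw [h10]; exact hx
      obtain ⟨y, hy⟩ := hex1 x hx'
      have h1 : φ1 ((resComplex πC dC hd).d 2 1 y) = 0 := by
        calc φ1 ((resComplex πC dC hd).d 2 1 y)
            = (P.complex.d 2 1 ≫ φ1) y := rfl
          _ = (0 : P.complex.X 2 ⟶ ModuleCat.of Rᵐᵒᵖ R) y := by rw [hφ']
          _ = 0 := rfl
      rw [← h1]
      exact congrArg _ hy.symm
    -- factor φ through K0
    let φ0 : (Fin m → R) →ₗ[Rᵐᵒᵖ] R := φ1.hom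
    let d0' : (Fin m → R) →ₗ[Rᵐᵒᵖ] K0 := d0.codRestrict K0
      (fun x => (u ((piOpEquiv m) x)).2)
    have hd0'surj : Function.Surjective d0' := by
      rintro ⟨y, hy⟩
      rw [← hd0range] at hy
      obtain ⟨x, hx⟩ := hy
      exact ⟨x, Subtype.ext hx⟩
    have hkerle : LinearMap.ker d0' ≤ LinearMap.ker φ0 := by
      intro x hx
      exact hker x (congrArg Subtype.val hx)
    let ebar := d0'.quotKerEquivOfSurjective hd0'surj
    let γK : K0 →ₗ[Rᵐᵒᵖ] R :=
      ((LinearMap.ker d0').liftQ φ0 hkerle) ∘ₗ (ebar.symm : K0 →ₗ[Rᵐᵒᵖ] _)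
    have hγK : ∀ x : Fin m → R, γK (d0' x) = φ0 x := by
      intro x
      have : ebar.symm (d0' x) = Submodule.Quotient.mk x := by
        apply ebar.injective
        rw [LinearEquiv.apply_symm_apply]
        rfl
      show ((LinearMap.ker d0').liftQ φ0 hkerle) (ebar.symm (d0' x)) = φ0 x
      rw [this]
      rfl
    obtain ⟨Γ, hΓ⟩ := lemC hcoh ha hb n K0 hK0fg γK
    refine ⟨(ModuleCat.ofHom Γ : X0 ⟶ ModuleCat.of Rᵐᵒᵖ R), ?_⟩
    show (resComplex πC dC hd).d 1 0 ≫ (ModuleCat.ofHom Γ : X0 ⟶ ModuleCat.of Rᵐᵒᵖ R) = φ1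
    rw [h10]
    apply ModuleCat.hom_ext; apply LinearMap.ext; intro x
    show Γ (d0 x) = φ0 x
    have hmem : d0 x ∈ K0 := (u ((piOpEquiv m) x)).2
    rw [hΓ (d0 x) hmem]
    exact hγK x
  have hz := (HomologicalComplex.exactAt_iff_isZero_homology _ 1).mp hex
  haveI := subsingleton_of_isZero hz
  exact Equiv.subsingleton (((forget _).mapIso (P.isoExt 1 (ModuleCat.of Rᵐᵒᵖ R))).toEquiv)

end Main
end
end StmtFive
end Aux

/-- Corollary 2.4: a right coherent ring satisfying the annihilator conditions is right
FP-injective. -/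
theorem stmt_5 (R : Type u) [Ring R] (hcoh : RightCoherent R)
    (ha : ∀ I J : Submodule Rᵐᵒᵖ R, I.FG → J.FG →
      lAnn R ((I ⊓ J : Submodule Rᵐᵒᵖ R) : Set R) = lAnn R (I : Set R) + lAnn R (J : Set R))
    (hb : ∀ I : Submodule R R, I.FG → (I : Set R) = lAnn R (rAnn R (I : Set R))) :
    FPInjective Rᵐᵒᵖ R := by
  intro F _ _ hFP
  exact StmtFive.auxmain hcoh ha hb F hFP
end

section
/- If R is a left FP-injective ring and a left IF-ring, then R is right coherent. -/
/-!
Common definitions: rings are associative with identity, not necessarily commutative.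
Left `R`-modules are `Module R M`; right `R`-modules are `Module Rᵐᵒᵖ M`.
-/

universe u

open MulOpposite Function Pointwise

section AuxProof

open CategoryTheory CategoryTheory.Limits

noncomputable section ResAux

variable {C : Type*} [Category C] [Abelian C] [EnoughProjectives C]

/-- Chain complex extending a given morphism between projectives by syzygies. -/
def resComplex (X₀ X₁ : C) (d : X₁ ⟶ X₀) : ChainComplex C ℕ :=
  ChainComplex.mk' X₀ X₁ d fun f => ⟨_, Projective.d f, @id (Projective.d f ≫ f = 0) ((Category.assoc (Projective.π (kernel f)) (kernel.ι f) f).trans (by rw [kernel.condition]; exact comp_zero))⟩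

lemma resComplex_d_1_0 (X₀ X₁ : C) (d : X₁ ⟶ X₀) : (resComplex X₀ X₁ d).d 1 0 = d := by
  simp [resComplex]

lemma resComplex_exactAt_succ (X₀ X₁ : C) (d : X₁ ⟶ X₀) (n : ℕ) :
    (resComplex X₀ X₁ d).ExactAt (n + 1) := by
  rw [HomologicalComplex.exactAt_iff' _ (n + 1 + 1) (n + 1) n (by simp) (by simp)]
  refine (ShortComplex.exact_iff_of_iso ?_).2 (exact_d_f ((resComplex X₀ X₁ d).d (n + 1) n))
  exact ShortComplex.isoMk (ChainComplex.mk'XIso X₀ X₁ d (fun f => ⟨_, Projective.d f,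
      @id (Projective.d f ≫ f = 0) ((Category.assoc (Projective.π (kernel f)) (kernel.ι f) f).trans
        (by rw [kernel.condition]; exact comp_zero))⟩) n) (Iso.refl _) (Iso.refl _)
    (by simp [resComplex, ChainComplex.mk'_d]; exact (Category.comp_id _).symm)
    ((Category.id_comp ((resComplex X₀ X₁ d).d (n + 1) n)).trans (Category.comp_id _).symm)

instance resComplex_projective (X₀ X₁ : C) [Projective X₀] [Projective X₁] (d : X₁ ⟶ X₀)
    (n : ℕ) : Projective ((resComplex X₀ X₁ d).X n) := by
  obtain (_ | _ | _ | n) := n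
  · exact ‹Projective X₀›
  · exact ‹Projective X₁›
  · apply Projective.projective_over
  · apply Projective.projective_over

/-- A projective resolution built from a chosen two-step beginning. -/
def resOf {Z X₀ X₁ : C} [Projective X₀] [Projective X₁] (π : X₀ ⟶ Z) [Epi π] (d : X₁ ⟶ X₀)
    (hd : d ≫ π = 0) (hex : (ShortComplex.mk d π hd).Exact) :
    ProjectiveResolution Z where
  complex := resComplex X₀ X₁ d
  π := (ChainComplex.toSingle₀Equiv _ _).symm ⟨π, by rw [resComplex_d_1_0]; exact hd⟩
  quasiIso := ⟨fun n => by
    cases n with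
    | zero =>
      rw [ChainComplex.quasiIsoAt₀_iff, ShortComplex.quasiIso_iff_of_zeros']
      · refine (ShortComplex.exact_and_epi_g_iff_of_iso ?_).2 ⟨hex, ‹Epi π›⟩
        exact ShortComplex.isoMk (Iso.refl _) (Iso.refl _) (Iso.refl _)
          (by exact (Category.id_comp _).trans ((resComplex_d_1_0 X₀ X₁ d).symm.trans (Category.comp_id _).symm))
          (by exact (Category.id_comp π).trans ((ChainComplex.toSingle₀Equiv_symm_apply_f_zero
            (C := resComplex X₀ X₁ d) π _).symm.trans (Category.comp_id _).symm))
      all_goals rfl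
    | succ n =>
      rw [quasiIsoAt_iff_exactAt']
      · apply resComplex_exactAt_succ
      · apply ChainComplex.exactAt_succ_single_obj⟩

end ResAux

/-- If `Ext¹(F/M, R) = 0` then every functional on `M` extends to `F`. -/
lemma extension_property {R : Type u} [Ring R] {G M F : Type u} [AddCommGroup G] [Module R G]
    [AddCommGroup M] [Module R M] [AddCommGroup F] [Module R F]
    (hG : Module.Projective R G) (hF : Module.Projective R F)
    (p : G →ₗ[R] M) (hp : Surjective p) (j : M →ₗ[R] F) (hj : Injective j)
    (hvan : ExtVanish R (F ⧸ LinearMap.range j) R) (f : M →ₗ[R] R) :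
    ∃ h : F →ₗ[R] R, h ∘ₗ j = f := by
  classical
  haveI : Projective (ModuleCat.of R G) := (IsProjective.iff_projective _).mp hG
  haveI : Projective (ModuleCat.of R F) := (IsProjective.iff_projective _).mp hF
  set Z : ModuleCat.{u} R := ModuleCat.of R (F ⧸ LinearMap.range j)
  set π₀ : ModuleCat.of R F ⟶ Z := ModuleCat.ofHom (LinearMap.range j).mkQ with hπ₀
  haveI : Epi π₀ := (ModuleCat.epi_iff_surjective _).2 (Submodule.mkQ_surjective _)
  set d : ModuleCat.of R G ⟶ ModuleCat.of R F := ModuleCat.ofHom (j ∘ₗ p) with hdd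
  have hd : d ≫ π₀ = 0 := by
    refine ModuleCat.hom_ext (LinearMap.ext fun x => ?_)
    show (LinearMap.range j).mkQ (j (p x)) = 0
    simpa using Submodule.mkQ_apply _ _ ▸ (Submodule.Quotient.mk_eq_zero _).2 ⟨p x, rfl⟩
  have hex : (ShortComplex.mk d π₀ hd).Exact := by
    rw [ShortComplex.moduleCat_exact_iff]
    intro x hx
    have : x ∈ LinearMap.range j := by
      have := (Submodule.Quotient.mk_eq_zero (LinearMap.range j) (x := x)).1 hx
      exact this
    obtain ⟨m, rfl⟩ := this
    obtain ⟨g, rfl⟩ := hp m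
    exact ⟨g, rfl⟩
  let P : ProjectiveResolution Z := resOf π₀ d hd hex
  let Y : ModuleCat.{u} R := ModuleCat.of R R
  let K := P.complex.linearYonedaObj ℤ Y
  have hiso := P.isoExt (R := ℤ) 1 Y
  have hsub : Subsingleton (K.homology 1) := by
    have e := ((forget (ModuleCat ℤ)).mapIso hiso).toEquiv
    exact ⟨fun a b => e.symm.injective (hvan.elim (e.symm a) (e.symm b))⟩
  have hzero : IsZero (K.homology 1) := ModuleCat.isZero_of_subsingleton _
  have hK : K.ExactAt 1 := (HomologicalComplex.exactAt_iff_isZero_homology _ _).2 hzero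
  rw [HomologicalComplex.exactAt_iff' K 0 1 2 (by simp) (by simp)] at hK
  rw [ShortComplex.moduleCat_exact_iff] at hK
  have h10 : P.complex.d 1 0 = d := resComplex_d_1_0 _ _ d
  set x : K.X 1 := (ModuleCat.ofHom (f ∘ₗ p) : ModuleCat.of R G ⟶ Y) with hx
  have w : P.complex.d 2 1 ≫ d = 0 := by rw [← h10]; exact P.complex.d_comp_d 2 1 0
  have hd21 : ∀ g : P.complex.X 2,
      p ((P.complex.d 2 1 : P.complex.X 2 ⟶ ModuleCat.of R G) g) = 0 := by
    intro g
    apply hj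
    have h2 := congrArg (fun (t : P.complex.X 2 ⟶ ModuleCat.of R F) => t g) w
    rw [map_zero]; exact h2
  have hcycle : (HomologicalComplex.sc' K 0 1 2).g x = 0 := by
    show P.complex.d 2 1 ≫ x = 0
    refine ModuleCat.hom_ext (LinearMap.ext fun g => ?_)
    show f (p ((P.complex.d 2 1) g)) = 0
    rw [hd21 g, map_zero]
  obtain ⟨y, hy⟩ := hK x hcycle
  refine ⟨y.hom, ?_⟩
  have hthis : P.complex.d 1 0 ≫ (y : ModuleCat.of R F ⟶ Y) = x := hy
  rw [h10] at hthis
  refine LinearMap.ext fun m => ?_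
  obtain ⟨g, rfl⟩ := hp m
  exact congrArg (fun (t : ModuleCat.of R G ⟶ Y) => t.hom g) hthis

end AuxProof

/-- Proposition 2.6: a left FP-injective left IF-ring is right coherent. -/
theorem stmt_7 (R : Type u) [Ring R] (h1 : FPInjective R R) (h2 : LeftIF R) :
    RightCoherent R := by
  intro I hI
  classical
  obtain ⟨n, a, ha⟩ := Submodule.fg_iff_exists_fin_generating_family.mp hI
  -- the left-module side: `M = Rⁿ/R·(a₁,…,aₙ)`
  set G := (Fin n →₀ R) with hG
  set v : G := ∑ i, Finsupp.single i (a i) with hv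
  set N : Submodule R G := Submodule.span R {v} with hN
  set M := G ⧸ N with hM
  haveI hMfp : Module.FinitePresentation R M :=
    Module.finitePresentation_of_surjective N.mkQ (Submodule.mkQ_surjective N)
      (by rw [Submodule.ker_mkQ]; exact Submodule.fg_span_singleton v)
  obtain ⟨ι, j, hj⟩ := h2 M hMfp
  obtain ⟨t, ht⟩ := Module.finite_def.mp (inferInstance : Module.Finite R M)
  set S : Finset ι := t.sup fun m => (j m).support with hS
  have hle : Submodule.span R (t : Set M) ≤
      Submodule.comap j (Finsupp.supported R R (S : Set ι)) := by
    refine Submodule.span_le.2 fun z hz => ?_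
    simp only [SetLike.mem_coe, Submodule.mem_comap, Finsupp.mem_supported]
    exact_mod_cast Finset.le_sup (f := fun m => (j m).support) hz
  have hsupp : ∀ m : M, j m ∈ Finsupp.supported R R (S : Set ι) := fun m =>
    hle (ht ▸ Submodule.mem_top)
  set F' := ((S : Set ι) →₀ R) with hF'
  set j' : M →ₗ[R] F' :=
    (Finsupp.supportedEquivFinsupp (S : Set ι)).toLinearMap
      ∘ₗ (j.codRestrict (Finsupp.supported R R (S : Set ι)) hsupp) with hj'def
  have hj' : Function.Injective j' := by
    rw [hj'def, LinearMap.coe_comp]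
    exact (Finsupp.supportedEquivFinsupp (S : Set ι)).injective.comp
      fun m₁ m₂ h => hj (congrArg Subtype.val h)
  haveI : Module.FinitePresentation R (F' ⧸ LinearMap.range j') :=
    Module.finitePresentation_of_surjective (LinearMap.range j').mkQ
      (Submodule.mkQ_surjective _)
      (by
        rw [Submodule.ker_mkQ, LinearMap.range_eq_map]
        exact Submodule.FG.map j' (Module.finite_def.mp inferInstance))
  have hvan : ExtVanish R (F' ⧸ LinearMap.range j') R := h1 _ inferInstance
  have hext : ∀ f : M →ₗ[R] R, ∃ h : F' →ₗ[R] R, h ∘ₗ j' = f := fun f =>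
    extension_property inferInstance inferInstance N.mkQ (Submodule.mkQ_surjective N)
      j' hj' hvan f
  -- the right-module side: the syzygies of `(a₁,…,aₙ)`
  set φ : (Fin n →₀ Rᵐᵒᵖ) →ₗ[Rᵐᵒᵖ] R := Finsupp.linearCombination Rᵐᵒᵖ a with hφ
  have hrange : LinearMap.range φ = I := by
    rw [hφ, Finsupp.range_linearCombination, ha]
  set Θ : (F' →ₗ[R] R) →ₗ[Rᵐᵒᵖ] (Fin n →₀ Rᵐᵒᵖ) :=
    { toFun := fun h => Finsupp.equivFunOnFinite.symm
        fun i => MulOpposite.op (h (j' (N.mkQ (Finsupp.single i 1))))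
      map_add' := fun h g => by
        ext i
        simp
      map_smul' := fun c h => by
        ext i
        simp [MulOpposite.smul_eq_mul_unop, smul_eq_mul] } with hΘ
  have hΘapply : ∀ (h : F' →ₗ[R] R) (i : Fin n),
      (Θ h) i = MulOpposite.op (h (j' (N.mkQ (Finsupp.single i 1)))) := by
    intro h i
    simp [hΘ]
  -- a functional applied to `v`
  have hGsum : ∀ g : G →ₗ[R] R, g v = ∑ i, a i * g (Finsupp.single i 1) := by
    intro g
    rw [hv, map_sum]
    refine Finset.sum_congr rfl fun i _ => ?_
    have : Finsupp.single i (a i) = a i • Finsupp.single i (1 : R) := by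
      rw [Finsupp.smul_single, smul_eq_mul, mul_one]
    rw [this, map_smul, smul_eq_mul]
  have hφsum : ∀ x : Fin n →₀ Rᵐᵒᵖ, φ x = ∑ i, a i * MulOpposite.unop (x i) := by
    intro x
    rw [hφ, Finsupp.linearCombination_apply, Finsupp.sum_fintype]
    · exact Finset.sum_congr rfl fun i _ => MulOpposite.smul_eq_mul_unop _ _
    · intro i; exact zero_smul _ _
  have hvzero : N.mkQ v = 0 := by
    rw [Submodule.mkQ_apply, Submodule.Quotient.mk_eq_zero]
    exact Submodule.mem_span_singleton_self v
  have key : LinearMap.range Θ = LinearMap.ker φ := by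
    apply le_antisymm
    · rintro _ ⟨h, rfl⟩
      rw [LinearMap.mem_ker, hφsum]
      have : ∀ i : Fin n, MulOpposite.unop ((Θ h) i)
          = (h ∘ₗ j' ∘ₗ N.mkQ) (Finsupp.single i 1) := by
        intro i; rw [hΘapply]; rfl
      rw [Finset.sum_congr rfl fun i _ => by rw [this i]]
      rw [← hGsum (h ∘ₗ j' ∘ₗ N.mkQ)]
      show h (j' (N.mkQ v)) = 0
      rw [hvzero, map_zero, map_zero]
    · intro x hx
      set g₀ : G →ₗ[R] R :=
        Finsupp.linearCombination R (fun i => MulOpposite.unop (x i)) with hg₀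
      have hg₀single : ∀ i : Fin n, g₀ (Finsupp.single i 1) = MulOpposite.unop (x i) := by
        intro i
        rw [hg₀, Finsupp.linearCombination_single, one_smul]
      have hNle : N ≤ LinearMap.ker g₀ := by
        rw [hN, Submodule.span_le, Set.singleton_subset_iff]
        rw [SetLike.mem_coe, LinearMap.mem_ker, hGsum]
        rw [Finset.sum_congr rfl fun i _ => by rw [hg₀single i]]
        rw [← hφsum]
        exact hx
      obtain ⟨h, hh⟩ := hext (N.liftQ g₀ hNle)
      refine ⟨h, ?_⟩
      ext i
      rw [hΘapply]
      have h1 : h (j' (N.mkQ (Finsupp.single i 1)))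
          = N.liftQ g₀ hNle (N.mkQ (Finsupp.single i 1)) := by
        exact congrArg (fun t => t (N.mkQ (Finsupp.single i 1))) (congrArg (fun t => t.toFun) hh)
      rw [h1, Submodule.mkQ_apply, Submodule.liftQ_apply, hg₀single i, MulOpposite.op_unop]
  -- `Hom(F', R)` is a finitely generated right module
  haveI : Module.Finite Rᵐᵒᵖ R := Module.Finite.equiv
    ({ toFun := MulOpposite.unop, invFun := MulOpposite.op,
       map_add' := fun x y => rfl, map_smul' := fun c x => rfl,
       left_inv := fun x => rfl, right_inv := fun x => rfl } :
        Rᵐᵒᵖ ≃ₗ[Rᵐᵒᵖ] R)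
  haveI : Module.Finite Rᵐᵒᵖ (F' →ₗ[R] R) := Module.Finite.equiv
    (((LinearEquiv.piCongrRight
        fun _ : ↥(S : Set ι) => (LinearMap.ringLmapEquivSelf R Rᵐᵒᵖ R).symm).trans
      (Finsupp.lsum Rᵐᵒᵖ)) : (↥(S : Set ι) → R) ≃ₗ[Rᵐᵒᵖ] (F' →ₗ[R] R))
  have hfg : (LinearMap.ker φ).FG := by
    rw [← key, LinearMap.range_eq_map]
    exact Submodule.FG.map Θ (Module.finite_def.mp inferInstance)
  -- conclude
  set φ' : (Fin n →₀ Rᵐᵒᵖ) →ₗ[Rᵐᵒᵖ] I :=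
    LinearMap.codRestrict I φ (fun c => by rw [← hrange]; exact ⟨c, rfl⟩) with hφ'
  have hsurj : Function.Surjective φ' := by
    rintro ⟨y, hy⟩
    rw [← hrange] at hy
    obtain ⟨c, rfl⟩ := hy
    exact ⟨c, rfl⟩
  exact Module.finitePresentation_of_surjective φ' hsurj
    (by rw [LinearMap.ker_codRestrict]; exact hfg)
end

section
/- An almost regular ring R is a left IF-ring if and only if R is von Neumann regular. -/
/-!
Common definitions: rings are associative with identity, not necessarily commutative.
Left `R`-modules are `Module R M`; right `R`-modules are `Module Rᵐᵒᵖ M`.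
-/

universe u

open MulOpposite Function Pointwise

section AuxNC

open FreeAbelianGroup in
/-- class of a pure tensor in `NCTensor`. -/
def ncmk {R : Type u} [Ring R] {K M : Type u} [AddCommGroup K] [Module Rᵐᵒᵖ K]
    [AddCommGroup M] [Module R M] (k : K) (m : M) : NCTensor R K M :=
  QuotientAddGroup.mk (FreeAbelianGroup.of (k, m))

variable {R : Type u} [Ring R] {K M : Type u} [AddCommGroup K] [Module Rᵐᵒᵖ K]
  [AddCommGroup M] [Module R M]

lemma ncmk_add_left (k₁ k₂ : K) (m : M) :
    (ncmk (k₁ + k₂) m : NCTensor R K M) = ncmk k₁ m + ncmk k₂ m := by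
  have hmem : FreeAbelianGroup.of (k₁ + k₂, m) - FreeAbelianGroup.of (k₁, m) -
      FreeAbelianGroup.of (k₂, m) ∈ TensorRels R K M :=
    AddSubgroup.subset_closure (Or.inl (Or.inl ⟨k₁, k₂, m, rfl⟩))
  have h0 : (QuotientAddGroup.mk (FreeAbelianGroup.of (k₁ + k₂, m) -
      FreeAbelianGroup.of (k₁, m) - FreeAbelianGroup.of (k₂, m)) : NCTensor R K M) = 0 :=
    (QuotientAddGroup.eq_zero_iff _).2 hmem
  rw [QuotientAddGroup.mk_sub, QuotientAddGroup.mk_sub, sub_sub, sub_eq_zero] at h0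
  exact h0

lemma ncmk_add_right (k : K) (m₁ m₂ : M) :
    (ncmk k (m₁ + m₂) : NCTensor R K M) = ncmk k m₁ + ncmk k m₂ := by
  have hmem : FreeAbelianGroup.of (k, m₁ + m₂) - FreeAbelianGroup.of (k, m₁) -
      FreeAbelianGroup.of (k, m₂) ∈ TensorRels R K M :=
    AddSubgroup.subset_closure (Or.inl (Or.inr ⟨k, m₁, m₂, rfl⟩))
  have h0 : (QuotientAddGroup.mk (FreeAbelianGroup.of (k, m₁ + m₂) -
      FreeAbelianGroup.of (k, m₁) - FreeAbelianGroup.of (k, m₂)) : NCTensor R K M) = 0 :=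
    (QuotientAddGroup.eq_zero_iff _).2 hmem
  rw [QuotientAddGroup.mk_sub, QuotientAddGroup.mk_sub, sub_sub, sub_eq_zero] at h0
  exact h0

lemma ncmk_op_smul (r : R) (k : K) (m : M) :
    (ncmk (op r • k) m : NCTensor R K M) = ncmk k (r • m) := by
  have hmem : FreeAbelianGroup.of (op r • k, m) - FreeAbelianGroup.of (k, r • m) ∈
      TensorRels R K M :=
    AddSubgroup.subset_closure (Or.inr ⟨r, k, m, rfl⟩)
  have h0 : (QuotientAddGroup.mk (FreeAbelianGroup.of (op r • k, m) -
      FreeAbelianGroup.of (k, r • m)) : NCTensor R K M) = 0 :=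
    (QuotientAddGroup.eq_zero_iff _).2 hmem
  rw [QuotientAddGroup.mk_sub, sub_eq_zero] at h0
  exact h0

lemma ncmk_zero_left (m : M) : (ncmk (0 : K) m : NCTensor R K M) = 0 := by
  have h := ncmk_add_left (R := R) (0 : K) 0 m
  rw [add_zero] at h
  exact (left_eq_add.1 h)

lemma ncmk_zero_right (k : K) : (ncmk k (0 : M) : NCTensor R K M) = 0 := by
  have h := ncmk_add_right (R := R) k (0 : M) 0
  rw [add_zero] at h
  exact (left_eq_add.1 h)

lemma ncmk_sum_right {ι' : Type*} (k : K) (t : Finset ι') (f : ι' → M) :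
    (ncmk k (∑ i ∈ t, f i) : NCTensor R K M) = ∑ i ∈ t, ncmk k (f i) := by
  classical
  induction t using Finset.induction_on with
  | empty => simpa using ncmk_zero_right k
  | insert _ _ hnot ih =>
      rw [Finset.sum_insert hnot, Finset.sum_insert hnot, ncmk_add_right, ih]

lemma tensorCongr_ncmk {K' M' : Type u} [AddCommGroup K'] [Module Rᵐᵒᵖ K'] [AddCommGroup M']
    [Module R M'] (μ : K →ₗ[Rᵐᵒᵖ] K') (ν : M →ₗ[R] M') (k : K) (m : M) :
    tensorCongr R μ ν (ncmk k m) = ncmk (μ k) (ν m) := rfl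

/-- The multiplication pairing `R/C ⊗ R/I → R/(C + I)`. -/
def mulQuotFun (C : Submodule Rᵐᵒᵖ R) (I : Submodule R R) (x : R ⧸ C) (y : R ⧸ I) :
    R ⧸ (C.toAddSubgroup ⊔ I.toAddSubgroup) :=
  Quotient.liftOn₂' x y (fun a b => QuotientAddGroup.mk (a * b)) (by
    intro a₁ b₁ a₂ b₂ h₁ h₂
    have h₁' : a₁ - a₂ ∈ C := (Submodule.quotientRel_def C).mp h₁
    have h₂' : b₁ - b₂ ∈ I := (Submodule.quotientRel_def I).mp h₂
    refine (QuotientAddGroup.eq_iff_sub_mem).2 ?_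
    have key : a₁ * b₁ - a₂ * b₂ = (a₁ - a₂) * b₁ + a₂ * (b₁ - b₂) := by noncomm_ring
    rw [key]
    exact AddSubgroup.add_mem _
      (AddSubgroup.mem_sup_left (C.smul_mem (op b₁) h₁'))
      (AddSubgroup.mem_sup_right (I.smul_mem a₂ h₂')))

lemma mulQuotFun_mk (C : Submodule Rᵐᵒᵖ R) (I : Submodule R R) (a b : R) :
    mulQuotFun C I (Submodule.Quotient.mk a) (Submodule.Quotient.mk b) =
      QuotientAddGroup.mk (a * b) := rfl

/-- The induced map `NCTensor R (R/C) (R/I) → R/(C + I)`. -/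
def mulQuot (C : Submodule Rᵐᵒᵖ R) (I : Submodule R R) :
    NCTensor R (R ⧸ C) (R ⧸ I) →+ R ⧸ (C.toAddSubgroup ⊔ I.toAddSubgroup) :=
  QuotientAddGroup.lift (TensorRels R (R ⧸ C) (R ⧸ I))
    (FreeAbelianGroup.lift fun p : (R ⧸ C) × (R ⧸ I) => mulQuotFun C I p.1 p.2) (by
      refine (AddSubgroup.closure_le _).2 ?_
      rintro x ((⟨k₁, k₂, m, rfl⟩ | ⟨k, m₁, m₂, rfl⟩) | ⟨r, k, m, rfl⟩) <;>
        refine AddMonoidHom.mem_ker.2 ?_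
      · obtain ⟨x₁, rfl⟩ := Submodule.Quotient.mk_surjective C k₁
        obtain ⟨x₂, rfl⟩ := Submodule.Quotient.mk_surjective C k₂
        obtain ⟨y, rfl⟩ := Submodule.Quotient.mk_surjective I m
        rw [map_sub, map_sub, ← Submodule.Quotient.mk_add]
        simp only [FreeAbelianGroup.lift_apply_of, mulQuotFun_mk]
        rw [← QuotientAddGroup.mk_sub, ← QuotientAddGroup.mk_sub]
        rw [show (x₁ + x₂) * y - x₁ * y - x₂ * y = 0 by noncomm_ring]
        exact QuotientAddGroup.mk_zero _
      · obtain ⟨x, rfl⟩ := Submodule.Quotient.mk_surjective C k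
        obtain ⟨y₁, rfl⟩ := Submodule.Quotient.mk_surjective I m₁
        obtain ⟨y₂, rfl⟩ := Submodule.Quotient.mk_surjective I m₂
        rw [map_sub, map_sub, ← Submodule.Quotient.mk_add]
        simp only [FreeAbelianGroup.lift_apply_of, mulQuotFun_mk]
        rw [← QuotientAddGroup.mk_sub, ← QuotientAddGroup.mk_sub]
        rw [show x * (y₁ + y₂) - x * y₁ - x * y₂ = 0 by noncomm_ring]
        exact QuotientAddGroup.mk_zero _
      · obtain ⟨x, rfl⟩ := Submodule.Quotient.mk_surjective C k
        obtain ⟨y, rfl⟩ := Submodule.Quotient.mk_surjective I m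
        rw [map_sub, ← Submodule.Quotient.mk_smul, ← Submodule.Quotient.mk_smul]
        simp only [FreeAbelianGroup.lift_apply_of, mulQuotFun_mk]
        rw [← QuotientAddGroup.mk_sub]
        rw [show (op r • x) * y - x * (r • y) = 0 by
          rw [op_smul_eq_mul, smul_eq_mul]; noncomm_ring]
        exact QuotientAddGroup.mk_zero _)

lemma mulQuot_ncmk (C : Submodule Rᵐᵒᵖ R) (I : Submodule R R) (a b : R) :
    mulQuot C I (ncmk (Submodule.Quotient.mk a) (Submodule.Quotient.mk b)) =
      QuotientAddGroup.mk (a * b) := by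
  have h1 : mulQuot C I (ncmk (Submodule.Quotient.mk a) (Submodule.Quotient.mk b)) =
      (FreeAbelianGroup.lift fun p : (R ⧸ C) × (R ⧸ I) => mulQuotFun C I p.1 p.2)
        (FreeAbelianGroup.of ((Submodule.Quotient.mk a : R ⧸ C),
          (Submodule.Quotient.mk b : R ⧸ I))) :=
    QuotientAddGroup.lift_mk' _ _ _
  rw [h1, FreeAbelianGroup.lift_apply_of, mulQuotFun_mk]

end AuxNC

section AuxRegular

variable {R : Type u} [Ring R]

lemma idem_aux {e q : R} (he : e * e = e) (hq : q * q = q) (hqe : q * e = 0) :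
    e * (e + q - e * q) = e ∧ q * (e + q - e * q) = q ∧
      (e + q - e * q) * (e + q - e * q) = e + q - e * q := by
  have h1 : e * (e + q - e * q) = e := by
    rw [mul_sub, mul_add, ← mul_assoc, he, add_sub_cancel_right]
  have h2 : q * (e + q - e * q) = q := by
    rw [mul_sub, mul_add, hqe, ← mul_assoc, hqe, zero_mul, sub_zero, zero_add, hq]
  refine ⟨h1, h2, ?_⟩
  calc (e + q - e * q) * (e + q - e * q)
      = e * (e + q - e * q) + q * (e + q - e * q) - e * (q * (e + q - e * q)) := by noncomm_ring
    _ = e + q - e * q := by rw [h1, h2]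

lemma exists_idem_span (hreg : ∀ a : R, ∃ x : R, a * x * a = a)
    (J : Submodule R R) (hJ : J.FG) :
    ∃ e : R, e * e = e ∧ J = Submodule.span R {e} := by
  refine Submodule.fg_induction (motive := fun J _ => ∃ e : R, e * e = e ∧ J = Submodule.span R {e})
    ?_ ?_ J hJ
  · intro x
    obtain ⟨y, hy⟩ := hreg x
    refine ⟨y * x, ?_, le_antisymm ?_ ?_⟩
    · calc (y * x) * (y * x) = y * (x * y * x) := by noncomm_ring
        _ = y * x := by rw [hy]
    · rw [Submodule.span_le, Set.singleton_subset_iff]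
      refine Submodule.mem_span_singleton.2 ⟨x, ?_⟩
      calc x • (y * x) = x * y * x := by rw [smul_eq_mul]; noncomm_ring
        _ = x := hy
    · rw [Submodule.span_le, Set.singleton_subset_iff]
      exact Submodule.mem_span_singleton.2 ⟨y, by rw [smul_eq_mul]⟩
  · rintro J₁ J₂ _ _ ⟨e, he, rfl⟩ ⟨f, hf, rfl⟩
    obtain ⟨y, hy⟩ := hreg (f - f * e)
    have he0 : (f - f * e) * e = 0 := by
      rw [sub_mul, mul_assoc, he, sub_self]
    have hq : (y * (f - f * e)) * (y * (f - f * e)) = y * (f - f * e) := by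
      calc (y * (f - f * e)) * (y * (f - f * e)) = y * ((f - f * e) * y * (f - f * e)) := by
            noncomm_ring
        _ = y * (f - f * e) := by rw [hy]
    have hqe : (y * (f - f * e)) * e = 0 := by
      calc (y * (f - f * e)) * e = y * ((f - f * e) * e) := by noncomm_ring
        _ = 0 := by rw [he0, mul_zero]
    obtain ⟨h1, h2, hgg⟩ := idem_aux he hq hqe
    have h3 : f * (y * (f - f * e)) = (f * e) * (y * (f - f * e)) + (f - f * e) := by
      calc f * (y * (f - f * e))
          = (f * e) * (y * (f - f * e)) + (f - f * e) * (y * (f - f * e)) := by noncomm_ring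
        _ = (f * e) * (y * (f - f * e)) + (f - f * e) := by
            rw [show (f - f * e) * (y * (f - f * e)) = (f - f * e) * y * (f - f * e) by
              rw [mul_assoc], hy]
    have hfg : f * (e + y * (f - f * e) - e * (y * (f - f * e))) = f := by
      calc f * (e + y * (f - f * e) - e * (y * (f - f * e)))
          = f * e + f * (y * (f - f * e)) - (f * e) * (y * (f - f * e)) := by noncomm_ring
        _ = f * e + ((f * e) * (y * (f - f * e)) + (f - f * e)) -
            (f * e) * (y * (f - f * e)) := by rw [h3]
        _ = f := by abel
    refine ⟨e + y * (f - f * e) - e * (y * (f - f * e)), hgg, le_antisymm (sup_le ?_ ?_) ?_⟩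
    · rw [Submodule.span_le, Set.singleton_subset_iff]
      exact Submodule.mem_span_singleton.2 ⟨e, by rw [smul_eq_mul, h1]⟩
    · rw [Submodule.span_le, Set.singleton_subset_iff]
      exact Submodule.mem_span_singleton.2 ⟨f, by rw [smul_eq_mul, hfg]⟩
    · rw [Submodule.span_le, Set.singleton_subset_iff]
      refine Submodule.mem_sup.2 ⟨(1 - (1 - e) * y * f) * e,
        Submodule.mem_span_singleton.2 ⟨1 - (1 - e) * y * f, by rw [smul_eq_mul]⟩,
        ((1 - e) * y) * f,
        Submodule.mem_span_singleton.2 ⟨(1 - e) * y, by rw [smul_eq_mul]⟩, ?_⟩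
      noncomm_ring

/-- Summand property: every f.g. submodule is the range of an endomorphism fixing it. -/
def SummandProp (F : Type u) [AddCommGroup F] [Module R F] : Prop :=
  ∀ K : Submodule R F, K.FG → ∃ p : F →ₗ[R] F,
    (∀ y ∈ K, p y = y) ∧ LinearMap.range p ≤ K

lemma summandProp_of_equiv {F G : Type u} [AddCommGroup F] [Module R F] [AddCommGroup G]
    [Module R G] (E : F ≃ₗ[R] G) (hF : SummandProp (R := R) F) : SummandProp (R := R) G := by
  intro K hK
  obtain ⟨p, hfix, hran⟩ := hF (K.comap (E : F →ₗ[R] G))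
    (by rw [Submodule.comap_equiv_eq_map_symm]; exact hK.map _)
  refine ⟨(E : F →ₗ[R] G) ∘ₗ p ∘ₗ (E.symm : G →ₗ[R] F), ?_, ?_⟩
  · intro y hy
    have : E.symm y ∈ K.comap (E : F →ₗ[R] G) := by
      simp [Submodule.mem_comap, LinearEquiv.apply_symm_apply, hy]
    simp only [LinearMap.comp_apply, LinearEquiv.coe_coe]
    rw [hfix _ this, LinearEquiv.apply_symm_apply]
  · rintro x ⟨z, rfl⟩
    have : p (E.symm z) ∈ K.comap (E : F →ₗ[R] G) := hran ⟨E.symm z, rfl⟩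
    exact this

lemma summandProp_prod {F : Type u} [AddCommGroup F] [Module R F]
    (hreg : ∀ a : R, ∃ x : R, a * x * a = a)
    (IH : SummandProp (R := R) F) : SummandProp (R := R) (F × R) := by
  intro K hK
  obtain ⟨e, he, hJ⟩ := exists_idem_span hreg (K.map (LinearMap.snd R F R)) (hK.map _)
  have heJ : e ∈ K.map (LinearMap.snd R F R) := by
    rw [hJ]; exact Submodule.mem_span_singleton_self e
  obtain ⟨k₀, hk₀K, hk₀2⟩ := heJ
  set k : F × R := e • k₀ with hkdef
  have hkK : k ∈ K := K.smul_mem e hk₀K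
  have hk2 : k.2 = e := by
    rw [hkdef]
    show e • k₀.2 = e
    rw [smul_eq_mul, show k₀.2 = e from hk₀2, he]
  have hmulE : ∀ z ∈ K, z.2 * e = z.2 := by
    intro z hz
    have hz2 : z.2 ∈ K.map (LinearMap.snd R F R) := ⟨z, hz, rfl⟩
    rw [hJ] at hz2
    obtain ⟨r, hr⟩ := Submodule.mem_span_singleton.1 hz2
    rw [← hr, smul_eq_mul, mul_assoc, he]
  set K₀ : Submodule R F := K.comap (LinearMap.inl R F R) with hK₀def
  set η : (F × R) →ₗ[R] R := (LinearMap.toSpanSingleton R R e) ∘ₗ (LinearMap.snd R F R)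
    with hηdef
  have hηz : ∀ z : F × R, η z = z.2 * e := fun z => rfl
  set τ : (F × R) →ₗ[R] F := LinearMap.fst R F R - η.smulRight k.1 with hτdef
  have hτz : ∀ z : F × R, τ z = z.1 - (z.2 * e) • k.1 := fun z => rfl
  have hsubK : ∀ z ∈ K, z - z.2 • k ∈ K := fun z hz => K.sub_mem hz (K.smul_mem _ hkK)
  have hsubpair : ∀ z : F × R, z.2 * e = z.2 → z - z.2 • k = ((z.1 - z.2 • k.1 : F), (0 : R)) := by
    intro z hz2
    have h2 : z.2 - z.2 • k.2 = 0 := by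
      rw [hk2, smul_eq_mul, hz2, sub_self]
    exact Prod.ext rfl h2
  have hK₀eq : K₀ = K.map τ := by
    apply le_antisymm
    · intro x hx
      have hxK : ((x, (0 : R)) : F × R) ∈ K := hx
      refine ⟨(x, (0 : R)), hxK, ?_⟩
      rw [hτz]
      simp
    · rintro x ⟨z, hz, rfl⟩
      have hz2 : z.2 * e = z.2 := hmulE z hz
      have hmem : z - z.2 • k ∈ K := hsubK z hz
      rw [hsubpair z hz2] at hmem
      show ((τ z, (0 : R)) : F × R) ∈ K
      rw [hτz, hz2]
      exact hmem
  have hK₀fg : K₀.FG := by rw [hK₀eq]; exact hK.map τ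
  obtain ⟨p₀, hp₀fix, hp₀ran⟩ := IH K₀ hK₀fg
  set p : (F × R) →ₗ[R] (F × R) :=
    η.smulRight k + (LinearMap.inl R F R) ∘ₗ (p₀ ∘ₗ τ) with hpdef
  have hpz : ∀ z : F × R, p z = (z.2 * e) • k + ((p₀ (z.1 - (z.2 * e) • k.1) : F), (0 : R)) :=
    fun z => rfl
  refine ⟨p, ?_, ?_⟩
  · intro y hy
    have hy2 : y.2 * e = y.2 := hmulE y hy
    have hmem : y - y.2 • k ∈ K := hsubK y hy
    rw [hsubpair y hy2] at hmem
    have hmem₀ : y.1 - y.2 • k.1 ∈ K₀ := hmem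
    rw [hpz, hy2, hp₀fix _ hmem₀]
    have : y.2 • k + ((y.1 - y.2 • k.1 : F), (0 : R)) = y := by
      refine Prod.ext ?_ ?_
      · show y.2 • k.1 + (y.1 - y.2 • k.1) = y.1
        abel
      · show y.2 • k.2 + 0 = y.2
        rw [hk2, smul_eq_mul, hy2, add_zero]
    rw [this]
  · rintro x ⟨z, rfl⟩
    rw [hpz]
    refine K.add_mem (K.smul_mem _ hkK) ?_
    have : p₀ (z.1 - (z.2 * e) • k.1) ∈ K₀ := hp₀ran ⟨_, rfl⟩
    exact this

/-- The linear equivalence `(Fin (n+1) → R) ≃ (Fin n → R) × R`. -/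
def finSuccLEquiv (n : ℕ) : (Fin (n + 1) → R) ≃ₗ[R] (Fin n → R) × R where
  toFun f := (fun i => f i.succ, f 0)
  invFun p := Fin.cons p.2 p.1
  map_add' f g := rfl
  map_smul' r f := rfl
  left_inv f := Fin.cons_self_tail f
  right_inv p := by
    refine Prod.ext ?_ ?_
    · funext i
      simp
    · simp

lemma summandProp_pi (hreg : ∀ a : R, ∃ x : R, a * x * a = a) (n : ℕ) :
    SummandProp (R := R) (Fin n → R) := by
  induction n with
  | zero =>
      intro K _
      refine ⟨LinearMap.id, fun y _ => rfl, ?_⟩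
      intro x _
      have hx0 : x = 0 := Subsingleton.elim _ _
      rw [hx0]; exact K.zero_mem
  | succ n ih =>
      exact summandProp_of_equiv (finSuccLEquiv n).symm (summandProp_prod hreg ih)

theorem key_bwd (R : Type u) [Ring R] (hreg : ∀ a : R, ∃ x : R, a * x * a = a) :
    LeftIF R := by
  intro M _ _ fpM
  haveI := fpM
  obtain ⟨L, _, _, K, E, hfree, hfin, hKfg⟩ := Module.FinitePresentation.equiv_quotient R M
  haveI := hfree
  haveI := hfin
  let b := Module.Free.chooseBasis R L
  let ι := Module.Free.ChooseBasisIndex R L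
  let eL : L ≃ₗ[R] (Fin (Fintype.card ι) → R) :=
    b.equivFun.trans (LinearEquiv.funCongrLeft R R (Fintype.equivFin ι).symm)
  have hsum : SummandProp (R := R) L :=
    summandProp_of_equiv eL.symm (summandProp_pi hreg (Fintype.card ι))
  obtain ⟨p, hfix, hran⟩ := hsum K hKfg
  set φ : L →ₗ[R] L := LinearMap.id - p with hφdef
  have hKle : K ≤ LinearMap.ker φ := by
    intro y hy
    simp only [hφdef, LinearMap.mem_ker, LinearMap.sub_apply, LinearMap.id_apply]
    rw [hfix y hy, sub_self]
  have hleK : LinearMap.ker φ ≤ K := by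
    intro y hy
    simp only [hφdef, LinearMap.mem_ker, LinearMap.sub_apply, LinearMap.id_apply,
      sub_eq_zero] at hy
    exact hran ⟨y, hy.symm⟩
  set ψ : (L ⧸ K) →ₗ[R] L := K.liftQ φ hKle with hψdef
  have hinjψ : Function.Injective ψ :=
    LinearMap.ker_eq_bot.1 (Submodule.ker_liftQ_eq_bot _ _ _ hleK)
  refine ⟨ι, (b.repr : L →ₗ[R] (ι →₀ R)) ∘ₗ ψ ∘ₗ (E : M →ₗ[R] L ⧸ K), ?_⟩
  have : Function.Injective (b.repr : L →ₗ[R] (ι →₀ R)) := b.repr.injective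
  exact this.comp (hinjψ.comp E.injective)

end AuxRegular

section AuxFwd

theorem key_fwd (R : Type u) [Ring R]
    (h2 : ∀ (M : Type u) [AddCommGroup M] [Module Rᵐᵒᵖ M], FpFlatRight R M)
    (hIF : LeftIF R) (a : R) : ∃ x : R, a * x * a = a := by
  classical
  set I : Submodule R R := Submodule.span R {a} with hIdef
  have hIfg : I.FG := ⟨{a}, by simp [hIdef]⟩
  have fpQ : Module.FinitePresentation R (R ⧸ I) :=
    Module.finitePresentation_of_surjective I.mkQ I.mkQ_surjective
      (by rwa [Submodule.ker_mkQ])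
  obtain ⟨ι, φ, hφ⟩ := hIF (R ⧸ I) fpQ
  set v : ι →₀ R := φ (Submodule.Quotient.mk 1) with hvdef
  have hmka : ∀ x : R, φ (Submodule.Quotient.mk x) = x • v := by
    intro x
    rw [hvdef, ← map_smul]
    congr 1
    rw [← Submodule.Quotient.mk_smul, smul_eq_mul, mul_one]
  have hmk0 : (Submodule.Quotient.mk a : R ⧸ I) = 0 :=
    (Submodule.Quotient.mk_eq_zero _).2 (Submodule.mem_span_singleton_self a)
  have hav : ∀ i : ι, a * v i = 0 := by
    intro i
    have h1 : a • v = 0 := by rw [← hmka, hmk0, map_zero]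
    have := congrArg (fun f : ι →₀ R => f i) h1
    simpa using this
  set s : Finset ι := v.support with hsdef
  set w : (↥s : Type u) → R := fun i => v i.1 with hwdef
  set ψ₀ : R →ₗ[R] ((↥s : Type u) → R) := LinearMap.toSpanSingleton R _ w with hψ₀def
  have hψ₀x : ∀ x : R, ψ₀ x = x • w := fun x => rfl
  have hIker : I ≤ LinearMap.ker ψ₀ := by
    rw [hIdef, Submodule.span_le, Set.singleton_subset_iff]
    have : ψ₀ a = 0 := by
      rw [hψ₀x]
      funext i
      show a * v i.1 = 0
      exact hav i.1
    exact this
  set ψ : (R ⧸ I) →ₗ[R] ((↥s : Type u) → R) := I.liftQ ψ₀ hIker with hψdef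
  have hkerψ₀ : LinearMap.ker ψ₀ ≤ I := by
    intro x hx
    have hx' : ∀ i : ↥s, x * v i.1 = 0 := by
      intro i
      have := congrArg (fun f : (↥s : Type u) → R => f i) (LinearMap.mem_ker.1 hx)
      simpa [hψ₀x, hwdef] using this
    have hxv : x • v = 0 := by
      ext i
      by_cases hi : i ∈ v.support
      · simpa using hx' ⟨i, hi⟩
      · have : v i = 0 := Finsupp.notMem_support_iff.1 hi
        simp [this]
    have : φ (Submodule.Quotient.mk x) = 0 := by rw [hmka, hxv]
    have h0 : (Submodule.Quotient.mk x : R ⧸ I) = 0 := by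
      apply hφ
      rw [this, map_zero]
    exact (Submodule.Quotient.mk_eq_zero _).1 h0
  have hinjψ : Function.Injective ψ :=
    LinearMap.ker_eq_bot.1 (Submodule.ker_liftQ_eq_bot _ _ _ hkerψ₀)
  set C : Submodule Rᵐᵒᵖ R := Submodule.span Rᵐᵒᵖ (Set.range w) with hCdef
  -- apply fp-flatness of the right module R/C
  have hT := h2 (R ⧸ C) (R ⧸ I) ((↥s : Type u) → R) fpQ inferInstance ψ hinjψ
  -- the element 1 ⊗ 1
  set t : NCTensor R (R ⧸ C) (R ⧸ I) :=
    ncmk (Submodule.Quotient.mk 1) (Submodule.Quotient.mk 1) with htdef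
  have hTt : tensorCongr R (LinearMap.id : (R ⧸ C) →ₗ[Rᵐᵒᵖ] (R ⧸ C)) ψ t = 0 := by
    rw [htdef, tensorCongr_ncmk]
    have hψ1 : ψ (Submodule.Quotient.mk 1) = w := by
      rw [hψdef]
      show ψ₀ 1 = w
      rw [hψ₀x, one_smul]
    rw [hψ1, LinearMap.id_apply]
    have hwsum : w = ∑ i : ↥s, Pi.single i (w i) := (Finset.univ_sum_single w).symm
    rw [hwsum, ncmk_sum_right]
    refine Finset.sum_eq_zero ?_
    intro i _
    have hsingle : Pi.single i (w i) =
        (w i) • Pi.single (M := fun _ : (↥s : Type u) => R) i (1 : R) := by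
      funext j
      by_cases hj : j = i
      · subst hj; simp
      · simp [Pi.single_apply, hj]
    rw [hsingle, ← ncmk_op_smul]
    have : (op (w i) • (Submodule.Quotient.mk 1 : R ⧸ C)) = 0 := by
      rw [← Submodule.Quotient.mk_smul, op_smul_eq_mul, one_mul]
      exact (Submodule.Quotient.mk_eq_zero _).2
        (Submodule.subset_span (Set.mem_range_self i))
    rw [this, ncmk_zero_left]
  have ht0 : t = 0 := by
    apply hT
    rw [hTt, map_zero]
  have h1mem : (1 : R) ∈ C.toAddSubgroup ⊔ I.toAddSubgroup := by
    have := congrArg (mulQuot C I) ht0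
    rw [mulQuot_ncmk, one_mul, map_zero] at this
    exact (QuotientAddGroup.eq_zero_iff _).1 this
  obtain ⟨c, hc, z, hz, hcz⟩ := AddSubgroup.mem_sup.1 h1mem
  obtain ⟨r, hr⟩ := Submodule.mem_span_singleton.1 (hz : z ∈ I)
  have hac : a * c = 0 := by
    have : ∀ y ∈ C, a * y = 0 := by
      intro y hy
      refine Submodule.span_induction ?_ ?_ ?_ ?_ hy
      · rintro _ ⟨i, rfl⟩
        exact hav i.1
      · exact mul_zero a
      · intro y₁ y₂ _ _ h₁ h₂
        rw [mul_add, h₁, h₂, add_zero]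
      · intro rr y _ h
        rw [← MulOpposite.op_unop rr, op_smul_eq_mul, ← mul_assoc, h, zero_mul]
    exact this c hc
  refine ⟨r, ?_⟩
  have : a * (c + z) = a := by rw [hcz, mul_one]
  rw [mul_add, hac, zero_add, ← hr, smul_eq_mul, ← mul_assoc] at this
  exact this

end AuxFwd

/-- Corollary 2.7: an almost regular ring is a left IF-ring iff it is von Neumann regular. -/
theorem stmt_8 (R : Type u) [Ring R]
    (h1 : ∀ (M : Type u) [AddCommGroup M] [Module R M], FpFlat R M)
    (h2 : ∀ (M : Type u) [AddCommGroup M] [Module Rᵐᵒᵖ M], FpFlatRight R M) :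
    LeftIF R ↔ ∀ a : R, ∃ x : R, a * x * a = a := by
  exact ⟨fun hIF a => key_fwd R h2 hIF a, fun hreg => key_bwd R hreg⟩
end

section
/- If R is a left coherent ring and a left CF-ring, then R is left noetherian and a left Kasch ring. -/
/-!
Common definitions: rings are associative with identity, not necessarily commutative.
Left `R`-modules are `Module R M`; right `R`-modules are `Module Rᵐᵒᵖ M`.
-/

universe u

open MulOpposite Function Pointwise

section Aux

variable {R : Type u} [Ring R]

lemma ker_mul_fg (h1 : LeftCoherent R) (a : R) :
    (LinearMap.ker (LinearMap.toSpanSingleton R R a)).FG := by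
  set l := LinearMap.toSpanSingleton R R a with hl
  have hfp : Module.FinitePresentation R ↥(LinearMap.range l) := by
    have := h1 (Submodule.span R {a}) (Submodule.fg_span_singleton a)
    rwa [LinearMap.span_singleton_eq_range] at this
  have := Module.FinitePresentation.fg_ker l.rangeRestrict l.surjective_rangeRestrict
  rwa [LinearMap.ker_rangeRestrict] at this

lemma inf_fg (h1 : LeftCoherent R) {I J : Submodule R R} (hI : I.FG) (hJ : J.FG) :
    (I ⊓ J).FG := by
  have hfpN : Module.FinitePresentation R ↥(I ⊔ J) := h1 _ (hI.sup hJ)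
  have hIf : Module.Finite R I := Module.Finite.iff_fg.mpr hI
  have hJf : Module.Finite R J := Module.Finite.iff_fg.mpr hJ
  let φ : (↥I × ↥J) →ₗ[R] ↥(I ⊔ J) :=
    (Submodule.inclusion le_sup_left).comp (LinearMap.fst R ↥I ↥J) +
    (Submodule.inclusion le_sup_right).comp (LinearMap.snd R ↥I ↥J)
  have hφ : Function.Surjective φ := by
    rintro ⟨x, hx⟩
    obtain ⟨y, hy, z, hz, rfl⟩ := Submodule.mem_sup.mp hx
    exact ⟨(⟨y, hy⟩, ⟨z, hz⟩), Subtype.ext rfl⟩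
  have hker := Module.FinitePresentation.fg_ker φ hφ
  have key : I ⊓ J = Submodule.map (I.subtype.comp (LinearMap.fst R ↥I ↥J))
      (LinearMap.ker φ) := by
    ext r
    constructor
    · rintro ⟨hrI, hrJ⟩
      refine ⟨(⟨r, hrI⟩, ⟨-r, neg_mem hrJ⟩), ?_, rfl⟩
      apply Subtype.ext
      show r + -r = (0 : R)
      exact add_neg_cancel r
    · rintro ⟨⟨x, y⟩, hxy, rfl⟩
      have : (x : R) + (y : R) = 0 := congrArg Subtype.val hxy
      have hx : (x : R) = -(y : R) := eq_neg_of_add_eq_zero_left this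
      refine ⟨x.2, ?_⟩
      show ((I.subtype.comp (LinearMap.fst R ↥I ↥J)) (x, y) : R) ∈ J
      show (x : R) ∈ J
      rw [hx]
      exact neg_mem y.2
  rw [key]
  exact hker.map _

lemma ideal_fg (h1 : LeftCoherent R) (h2 : LeftCF R) (I : Submodule R R) : I.FG := by
  classical
  have hcyc : CyclicModule R (R ⧸ I) := by
    refine ⟨Submodule.Quotient.mk 1, ?_⟩
    rw [eq_top_iff]
    rintro x -
    obtain ⟨r, rfl⟩ := Submodule.Quotient.mk_surjective I x
    have : (Submodule.Quotient.mk r : R ⧸ I) = r • Submodule.Quotient.mk 1 := by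
      rw [← Submodule.Quotient.mk_smul, smul_eq_mul, mul_one]
    rw [this]
    exact Submodule.smul_mem _ _ (Submodule.mem_span_singleton_self _)
  obtain ⟨ι, f, hf⟩ := h2 (R ⧸ I) hcyc
  set v : ι →₀ R := f (Submodule.Quotient.mk 1) with hv
  have key : I = v.support.inf fun j => LinearMap.ker (LinearMap.toSpanSingleton R R (v j)) := by
    ext r
    have h1' : (Submodule.Quotient.mk r : R ⧸ I) = r • Submodule.Quotient.mk 1 := by
      rw [← Submodule.Quotient.mk_smul, smul_eq_mul, mul_one]
    have this : r ∈ I ↔ r • v = 0 := by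
      rw [← Submodule.Quotient.mk_eq_zero, ← hf.eq_iff, map_zero, h1', map_smul]
    constructor
    · intro hr
      have hrv : r • v = 0 := this.mp hr
      rw [Submodule.mem_finsetInf]
      intro j _
      have := congrArg (fun w : ι →₀ R => w j) hrv
      simpa [smul_eq_mul] using this
    · intro hr
      rw [Submodule.mem_finsetInf] at hr
      apply this.mpr
      ext j
      by_cases hj : j ∈ v.support
      · have := hr j hj
        simpa [smul_eq_mul, LinearMap.mem_ker] using this
      · have : v j = 0 := Finsupp.notMem_support_iff.mp hj
        simp [this]
  rw [key]
  induction v.support using Finset.induction with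
  | empty => simpa using Module.Finite.fg_top (R := R) (M := R)
  | insert _ _ hns ih =>
    rw [Finset.inf_insert]
    exact inf_fg h1 (ker_mul_fg h1 _) ih

end Aux

/-- Lemma 2.10(1): a left coherent left CF-ring is left noetherian and left Kasch. -/
theorem stmt_11 (R : Type u) [Ring R] (h1 : LeftCoherent R) (h2 : LeftCF R) :
    IsNoetherianRing R ∧ LeftKasch R := by
  constructor
  · rw [isNoetherianRing_iff, isNoetherian_def]
    exact fun I => ideal_fg h1 h2 I
  · intro M _ _ hcyc hnt
    obtain ⟨ι, f, hf⟩ := h2 M hcyc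
    obtain ⟨m, hm⟩ := exists_ne (0 : M)
    have hfm : f m ≠ 0 := fun h => hm (hf (by rw [h, map_zero]))
    obtain ⟨j, hj⟩ : ∃ j, f m j ≠ 0 := by
      by_contra h
      push_neg at h
      exact hfm (Finsupp.ext h)
    refine ⟨(Finsupp.lapply j).comp f, fun h => hj ?_⟩
    have := congrArg (fun g => g m) h
    simpa [Finsupp.lapply_apply] using this
end
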